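/- arXiv:2106.02060 — 8 statements merged into one kernel-verified Lean document; each statement's English description precedes it below -/
import Mathlib

section
/- Let h : [0,1] × ℝ → ℝ be continuous and let U : [0,1] → ℝ be continuously differentiable on [0,1] and twice differentiable on (0,1). Assume that U''(x) + h(x, U(x)) ≥ 0 for all x ∈ (0,1), that U'(0) ≥ 0 and U'(1) ≤ 0 (i.e. the outward normal derivative of U is ≤ 0 at both endpoints). If x₀ ∈ [0,1] is a point where U attains its maximum over [0,1], then h(x₀, U(x₀)) ≥ 0. -/
open Set

/-!
Suppose `h(x₀, U(x₀)) < 0`. By continuity `h(x, U(x)) < 0`, hence `U'' > 0`, on a one-sided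
interval next to `x₀` inside `[0,1]`, so `U` is strictly convex there. If `x₀ < 1`, then
`U'(x₀) ≥ 0` (by the boundary condition at `0`, or because an interior maximum is critical), and
strict convexity makes `U` exceed `U(x₀)` just to the right of `x₀`. If `x₀ = 1`, then
`U'(1) ≤ 0` makes `U` exceed `U(1)` just to the left. Either way `x₀` is not a maximum.
-/

open Filter Topology

section StrictConvexity

variable {f f' f'' : ℝ → ℝ} {a b : ℝ}

theorem deriv_mul_lt_sub_lt_deriv_mul_of_deriv2_pos (hab : a < b)
    (hf : ContinuousOn f (Icc a b)) (hf' : ∀ x ∈ Ioo a b, HasDerivAt f (f' x) x)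
    (hf'c : ContinuousOn f' (Icc a b)) (hf'' : ∀ x ∈ Ioo a b, HasDerivAt f' (f'' x) x)
    (hpos : ∀ x ∈ Ioo a b, 0 < f'' x) :
    f' a * (b - a) < f b - f a ∧ f b - f a < f' b * (b - a) := by
  have hmono : StrictMonoOn f' (Icc a b) :=
    strictMonoOn_of_deriv_pos (convex_Icc a b) hf'c fun x hx => by
      rw [interior_Icc] at hx
      exact (hf'' x hx).deriv ▸ hpos x hx
  obtain ⟨c, hc, hslope⟩ := exists_hasDerivAt_eq_slope f f' hab hf hf'
  have hba : 0 < b - a := sub_pos.2 hab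
  have hmvt : f b - f a = f' c * (b - a) := by
    rw [hslope, div_mul_cancel₀ _ hba.ne']
  rw [hmvt]
  exact ⟨mul_lt_mul_of_pos_right (hmono (left_mem_Icc.2 hab.le) (Ioo_subset_Icc_self hc) hc.1) hba,
    mul_lt_mul_of_pos_right (hmono (Ioo_subset_Icc_self hc) (right_mem_Icc.2 hab.le) hc.2) hba⟩

theorem lt_of_deriv2_pos_of_deriv_left_nonneg (hab : a < b)
    (hf : ContinuousOn f (Icc a b)) (hf' : ∀ x ∈ Ioo a b, HasDerivAt f (f' x) x)
    (hf'c : ContinuousOn f' (Icc a b)) (hf'' : ∀ x ∈ Ioo a b, HasDerivAt f' (f'' x) x)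
    (hpos : ∀ x ∈ Ioo a b, 0 < f'' x) (ha : 0 ≤ f' a) : f a < f b := by
  have := (deriv_mul_lt_sub_lt_deriv_mul_of_deriv2_pos hab hf hf' hf'c hf'' hpos).1
  nlinarith

theorem lt_of_deriv2_pos_of_deriv_right_nonpos (hab : a < b)
    (hf : ContinuousOn f (Icc a b)) (hf' : ∀ x ∈ Ioo a b, HasDerivAt f (f' x) x)
    (hf'c : ContinuousOn f' (Icc a b)) (hf'' : ∀ x ∈ Ioo a b, HasDerivAt f' (f'' x) x)
    (hpos : ∀ x ∈ Ioo a b, 0 < f'' x) (hb : f' b ≤ 0) : f b < f a := by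
  have := (deriv_mul_lt_sub_lt_deriv_mul_of_deriv2_pos hab hf hf' hf'c hf'' hpos).2
  nlinarith

end StrictConvexity

section OneSidedIntervals

variable {p : ℝ → Prop} {s : Set ℝ} {x₀ : ℝ}

theorem exists_Ioo_right_of_eventually_nhdsWithin {b₀ : ℝ} (hx₀ : x₀ < b₀)
    (hs : Ico x₀ b₀ ⊆ s) (hp : ∀ᶠ x in 𝓝[s] x₀, p x) :
    ∃ b ∈ Ioc x₀ b₀, ∀ x ∈ Ioo x₀ b, p x :=
  (mem_nhdsGT_iff_exists_mem_Ioc_Ioo_subset hx₀).1 <|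
    nhdsWithin_le_of_mem (mem_of_superset (Ico_mem_nhdsGT hx₀) hs) hp

theorem exists_Ioo_left_of_eventually_nhdsWithin {a₀ : ℝ} (hx₀ : a₀ < x₀)
    (hs : Ioc a₀ x₀ ⊆ s) (hp : ∀ᶠ x in 𝓝[s] x₀, p x) :
    ∃ a ∈ Ico a₀ x₀, ∀ x ∈ Ioo a x₀, p x :=
  (mem_nhdsLT_iff_exists_mem_Ico_Ioo_subset hx₀).1 <|
    nhdsWithin_le_of_mem (mem_of_superset (Ioc_mem_nhdsLT hx₀) hs) hp

end OneSidedIntervals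

/-- One-dimensional elliptic maximum principle (Lemma 2.1(i)):
if `U'' + h(x, U) ≥ 0` on `(0,1)`, `U'(0) ≥ 0`, `U'(1) ≤ 0`, and `U` attains its
maximum over `[0,1]` at `x₀`, then `h(x₀, U(x₀)) ≥ 0`. -/
theorem stmt_0 (h : ℝ → ℝ → ℝ) (U U' U'' : ℝ → ℝ)
    (hcont : ContinuousOn (fun p : ℝ × ℝ => h p.1 p.2) (Icc 0 1 ×ˢ univ))
    (hU : ∀ x ∈ Icc (0:ℝ) 1, HasDerivWithinAt U (U' x) (Icc 0 1) x)
    (hU'cont : ContinuousOn U' (Icc 0 1))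
    (hU'' : ∀ x ∈ Ioo (0:ℝ) 1, HasDerivAt U' (U'' x) x)
    (hineq : ∀ x ∈ Ioo (0:ℝ) 1, 0 ≤ U'' x + h x (U x))
    (h0 : 0 ≤ U' 0) (h1 : U' 1 ≤ 0)
    (x₀ : ℝ) (hx₀ : x₀ ∈ Icc (0:ℝ) 1)
    (hmax : ∀ x ∈ Icc (0:ℝ) 1, U x ≤ U x₀) :
    0 ≤ h x₀ (U x₀) := by
  by_contra! hneg
  have hUc : ContinuousOn U (Icc 0 1) := fun x hx => (hU x hx).continuousWithinAt
  have hU' : ∀ x ∈ Ioo (0:ℝ) 1, HasDerivAt U (U' x) x := fun x hx =>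
    (hU x (Ioo_subset_Icc_self hx)).hasDerivAt (Icc_mem_nhds hx.1 hx.2)
  have hev : ∀ᶠ x in 𝓝[Icc 0 1] x₀, h x (U x) < 0 :=
    ((hcont.comp (continuousOn_id.prodMk hUc) fun x hx => ⟨hx, mem_univ _⟩) x₀ hx₀).eventually
      (eventually_lt_nhds hneg)
  have hUpos : ∀ x ∈ Ioo (0:ℝ) 1, h x (U x) < 0 → 0 < U'' x := fun x hx hx' => by
    linarith [hineq x hx]
  rcases hx₀.2.lt_or_eq with hlt | rfl
  · obtain ⟨b, hb, hright⟩ :=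
      exists_Ioo_right_of_eventually_nhdsWithin hlt (Ico_subset_Icc_self.trans
        (Icc_subset_Icc_left hx₀.1)) hev
    have hsub : Ioo x₀ b ⊆ Ioo 0 1 := Ioo_subset_Ioo hx₀.1 hb.2
    have hderiv : 0 ≤ U' x₀ := by
      rcases hx₀.1.eq_or_lt with rfl | hpos
      · exact h0
      · have hloc : IsLocalMax U x₀ := Filter.eventually_of_mem (Icc_mem_nhds hpos hlt) hmax
        exact (hloc.hasDerivAt_eq_zero (hU' x₀ ⟨hpos, hlt⟩)).ge
    exact (hmax b ⟨hx₀.1.trans hb.1.le, hb.2⟩).not_gt <|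
      lt_of_deriv2_pos_of_deriv_left_nonneg hb.1 (hUc.mono (Icc_subset_Icc hx₀.1 hb.2))
        (fun x hx => hU' x (hsub hx)) (hU'cont.mono (Icc_subset_Icc hx₀.1 hb.2))
        (fun x hx => hU'' x (hsub hx)) (fun x hx => hUpos x (hsub hx) (hright x hx)) hderiv
  · obtain ⟨a, ha, hleft⟩ :=
      exists_Ioo_left_of_eventually_nhdsWithin zero_lt_one Ioc_subset_Icc_self hev
    have hsub : Ioo a 1 ⊆ Ioo 0 1 := Ioo_subset_Ioo_left ha.1
    exact (hmax a ⟨ha.1, ha.2.le⟩).not_gt <|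
      lt_of_deriv2_pos_of_deriv_right_nonpos ha.2 (hUc.mono (Icc_subset_Icc_left ha.1))
        (fun x hx => hU' x (hsub hx)) (hU'cont.mono (Icc_subset_Icc_left ha.1))
        (fun x hx => hU'' x (hsub hx)) (fun x hx => hUpos x (hsub hx) (hleft x hx)) h1
end

section
/- Let h : [0,1] × ℝ → ℝ be continuous and let U : [0,1] → ℝ be continuously differentiable on [0,1] and twice differentiable on (0,1). Assume that U''(x) + h(x, U(x)) ≤ 0 for all x ∈ (0,1), that U'(0) ≤ 0 and U'(1) ≥ 0 (i.e. the outward normal derivative of U is ≥ 0 at both endpoints). If x₀ ∈ [0,1] is a point where U attains its minimum over [0,1], then h(x₀, U(x₀)) ≤ 0. -/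
/-!
Suppose `h(x₀, U(x₀)) > 0`. By continuity `h(x, U(x)) > 0`, hence `U'' < 0`, on a one-sided
interval `[x₀, c]` or `[c, x₀]` inside `[0, 1]`, so `U'` is strictly decreasing there. At a
minimum `x₀ < 1` we have `U'(x₀) ≤ 0` (Fermat in the interior, the boundary condition at `0`),
so `U' < 0` on `(x₀, c]` and `U(c) < U(x₀)`; if `x₀ = 1`, then `U' > U'(1) ≥ 0` on `[c, 1)` and
again `U(c) < U(1)`. Either way the minimality of `x₀` is contradicted.
-/

open Set Filter Topology

section Interval

variable {α : Type*} [TopologicalSpace α] [LinearOrder α] [OrderTopology α] [DenselyOrdered α]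

theorem exists_Icc_subset_of_mem_nhdsWithin_Icc_of_lt [NoMaxOrder α] {s : Set α} {a b x : α}
    (hx : x ∈ Icc a b) (hxb : x < b) (hs : s ∈ 𝓝[Icc a b] x) :
    ∃ c, x < c ∧ Icc x c ⊆ Icc a b ∩ s := by
  refine mem_nhdsGE_iff_exists_Icc_subset.1 ?_
  rw [← nhdsWithin_Icc_eq_nhdsGE hxb]
  exact nhdsWithin_mono _ (Icc_subset_Icc_left hx.1) (inter_mem self_mem_nhdsWithin hs)

theorem exists_Icc_subset_of_mem_nhdsWithin_Icc_right [NoMinOrder α] {s : Set α} {a b : α}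
    (hab : a < b) (hs : s ∈ 𝓝[Icc a b] b) : ∃ c, c < b ∧ Icc c b ⊆ Icc a b ∩ s := by
  refine mem_nhdsLE_iff_exists_Icc_subset.1 ?_
  rw [← nhdsWithin_Icc_eq_nhdsLE hab]
  exact inter_mem self_mem_nhdsWithin hs

end Interval

section Calculus

variable {f f' : ℝ → ℝ} {a b : ℝ}

theorem strictAntiOn_Icc_of_hasDerivAt_neg (hf : ContinuousOn f (Icc a b))
    (hf' : ∀ x ∈ Ioo a b, HasDerivAt f (f' x) x) (hneg : ∀ x ∈ Ioo a b, f' x < 0) :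
    StrictAntiOn f (Icc a b) :=
  strictAntiOn_of_hasDerivWithinAt_neg (convex_Icc a b) hf
    (by simpa using fun x hx ↦ (hf' x hx).hasDerivWithinAt) (by simpa using hneg)

theorem strictMonoOn_Icc_of_hasDerivAt_pos (hf : ContinuousOn f (Icc a b))
    (hf' : ∀ x ∈ Ioo a b, HasDerivAt f (f' x) x) (hpos : ∀ x ∈ Ioo a b, 0 < f' x) :
    StrictMonoOn f (Icc a b) :=
  strictMonoOn_of_hasDerivWithinAt_pos (convex_Icc a b) hf
    (by simpa using fun x hx ↦ (hf' x hx).hasDerivWithinAt) (by simpa using hpos)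

theorem lt_left_of_strictAntiOn_deriv (hab : a < b) (hf : ContinuousOn f (Icc a b))
    (hf' : ∀ x ∈ Ioo a b, HasDerivAt f (f' x) x) (hanti : StrictAntiOn f' (Icc a b))
    (ha : f' a ≤ 0) : f b < f a := by
  refine strictAntiOn_Icc_of_hasDerivAt_neg hf hf' (fun x hx ↦ ?_)
    (left_mem_Icc.2 hab.le) (right_mem_Icc.2 hab.le) hab
  exact (hanti (left_mem_Icc.2 hab.le) (Ioo_subset_Icc_self hx) hx.1).trans_le ha

theorem lt_right_of_strictAntiOn_deriv (hab : a < b) (hf : ContinuousOn f (Icc a b))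
    (hf' : ∀ x ∈ Ioo a b, HasDerivAt f (f' x) x) (hanti : StrictAntiOn f' (Icc a b))
    (hb : 0 ≤ f' b) : f a < f b := by
  refine strictMonoOn_Icc_of_hasDerivAt_pos hf hf' (fun x hx ↦ ?_)
    (left_mem_Icc.2 hab.le) (right_mem_Icc.2 hab.le) hab
  exact hb.trans_lt (hanti (Ioo_subset_Icc_self hx) (right_mem_Icc.2 hab.le) hx.2)

theorem deriv_nonpos_of_isMinOn_Icc (hf' : ∀ x ∈ Ioo a b, HasDerivAt f (f' x) x)
    (ha : f' a ≤ 0) {x₀ : ℝ} (hx₀ : x₀ ∈ Ico a b) (hmin : IsMinOn f (Icc a b) x₀) :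
    f' x₀ ≤ 0 := by
  rcases hx₀.1.eq_or_lt with rfl | hax₀
  · exact ha
  · have hloc : IsLocalMin f x₀ := hmin.isLocalMin (Icc_mem_nhds hax₀ hx₀.2)
    exact (hloc.hasDerivAt_eq_zero (hf' x₀ ⟨hax₀, hx₀.2⟩)).le

end Calculus

/-- One-dimensional elliptic minimum principle (Lemma 2.1(ii)):
if `U'' + h(x, U) ≤ 0` on `(0,1)`, `U'(0) ≤ 0`, `U'(1) ≥ 0`, and `U` attains its
minimum over `[0,1]` at `x₀`, then `h(x₀, U(x₀)) ≤ 0`. -/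
theorem stmt_1 (h : ℝ → ℝ → ℝ) (U U' U'' : ℝ → ℝ)
    (hcont : ContinuousOn (fun p : ℝ × ℝ => h p.1 p.2) (Icc 0 1 ×ˢ univ))
    (hU : ∀ x ∈ Icc (0:ℝ) 1, HasDerivWithinAt U (U' x) (Icc 0 1) x)
    (hU'cont : ContinuousOn U' (Icc 0 1))
    (hU'' : ∀ x ∈ Ioo (0:ℝ) 1, HasDerivAt U' (U'' x) x)
    (hineq : ∀ x ∈ Ioo (0:ℝ) 1, U'' x + h x (U x) ≤ 0)
    (h0 : U' 0 ≤ 0) (h1 : 0 ≤ U' 1)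
    (x₀ : ℝ) (hx₀ : x₀ ∈ Icc (0:ℝ) 1)
    (hmin : ∀ x ∈ Icc (0:ℝ) 1, U x₀ ≤ U x) :
    h x₀ (U x₀) ≤ 0 := by
  by_contra! hpos
  have hUc : ContinuousOn U (Icc 0 1) := fun x hx ↦ (hU x hx).continuousWithinAt
  have hUd : ∀ x ∈ Ioo (0:ℝ) 1, HasDerivAt U (U' x) x := fun x hx ↦
    (hU x (Ioo_subset_Icc_self hx)).hasDerivAt (Icc_mem_nhds hx.1 hx.2)
  have hg : ContinuousOn (fun x ↦ h x (U x)) (Icc 0 1) :=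
    hcont.comp (continuousOn_id.prodMk hUc) fun x hx ↦ ⟨hx, mem_univ _⟩
  have hnear : {x | 0 < h x (U x)} ∈ 𝓝[Icc 0 1] x₀ := hg x₀ hx₀ (Ioi_mem_nhds hpos)
  have hIoo : ∀ {a b : ℝ}, Icc a b ⊆ Icc 0 1 → Ioo a b ⊆ Ioo 0 1 := fun hsub ↦ by
    simpa using interior_mono hsub
  have hanti : ∀ a b, Icc a b ⊆ Icc 0 1 ∩ {x | 0 < h x (U x)} → StrictAntiOn U' (Icc a b) :=
    fun a b hsub ↦ by
      have hsub' : Icc a b ⊆ Icc 0 1 := fun x hx ↦ (hsub hx).1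
      refine strictAntiOn_Icc_of_hasDerivAt_neg (hU'cont.mono hsub')
        (fun x hx ↦ hU'' x (hIoo hsub' hx)) fun x hx ↦ ?_
      have hgx : 0 < h x (U x) := (hsub (Ioo_subset_Icc_self hx)).2
      linarith [hineq x (hIoo hsub' hx)]
  rcases hx₀.2.lt_or_eq with hlt | rfl
  · obtain ⟨c, hc, hsub⟩ := exists_Icc_subset_of_mem_nhdsWithin_Icc_of_lt hx₀ hlt hnear
    have hsub' : Icc x₀ c ⊆ Icc 0 1 := fun x hx ↦ (hsub hx).1
    have hU'x₀ : U' x₀ ≤ 0 := deriv_nonpos_of_isMinOn_Icc hUd h0 ⟨hx₀.1, hlt⟩ hmin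
    have hdrop : U c < U x₀ := lt_left_of_strictAntiOn_deriv hc (hUc.mono hsub')
      (fun x hx ↦ hUd x (hIoo hsub' hx)) (hanti _ _ hsub) hU'x₀
    exact (hmin c (hsub' (right_mem_Icc.2 hc.le))).not_gt hdrop
  · obtain ⟨c, hc, hsub⟩ := exists_Icc_subset_of_mem_nhdsWithin_Icc_right one_pos hnear
    have hsub' : Icc c 1 ⊆ Icc 0 1 := fun x hx ↦ (hsub hx).1
    have hdrop : U c < U 1 := lt_right_of_strictAntiOn_deriv hc (hUc.mono hsub')
      (fun x hx ↦ hUd x (hIoo hsub' hx)) (hanti _ _ hsub) h1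
    exact (hmin c (hsub' (left_mem_Icc.2 hc.le))).not_gt hdrop
end

section
/- Let d > 0 and let w : [0,1] → ℝ be twice continuously differentiable with w'(0) = w'(1) = 0, satisfying d·w''(x) + (w₊(x)/δ)·(a₁ − b₁·w₊(x)/δ) − w₋(x)·(a₂ − c₂·w₋(x)/γ) = 0 for all x ∈ [0,1], where w₊ := max{w, 0} and w₋ := −min{w, 0}, together with the integral constraint ∫₀¹ (w₊(x)/δ)·(a₁ − b₁·w₊(x)/δ) dx = 0. Then w is constant, and its value is one of δa₁/b₁, 0, or −γa₂/c₂. -/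
/-!
Both reaction terms are logistic: the one of `w₊` is negative exactly when `w > δa₁/b₁`, the one
of `w₋` exactly when `w < -γa₂/c₂`. At a maximum of `w` above `δa₁/b₁` the Neumann condition
gives `w' = 0` while the equation gives `w'' > 0`, which is impossible; symmetrically at a
minimum, so `-γa₂/c₂ ≤ w ≤ δa₁/b₁`, where both reaction terms are nonnegative. Integrating the
equation, `∫ w'' = w'(1) - w'(0) = 0`, so the integral constraint makes both reaction terms
have zero integral, hence vanish. Thus `w` takes values in the finite set
`{δa₁/b₁, 0, -γa₂/c₂}`, and being continuous on `[0,1]` it is constant.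
-/

open Set

theorem StrictMonoOn.of_hasDerivWithinAt_pos_of_subset {s D : Set ℝ} {f f' : ℝ → ℝ}
    (hf : ∀ x ∈ s, HasDerivWithinAt f (f' x) s x) (hD : Convex ℝ D) (hDs : D ⊆ s)
    (hpos : ∀ x ∈ interior D, 0 < f' x) : StrictMonoOn f D :=
  strictMonoOn_of_hasDerivWithinAt_pos hD (fun x hx ↦ (hf x (hDs hx)).continuousWithinAt.mono hDs)
    (fun x hx ↦ (hf x (hDs (interior_subset hx))).mono (interior_subset.trans hDs)) hpos

theorem StrictAntiOn.of_hasDerivWithinAt_neg_of_subset {s D : Set ℝ} {f f' : ℝ → ℝ}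
    (hf : ∀ x ∈ s, HasDerivWithinAt f (f' x) s x) (hD : Convex ℝ D) (hDs : D ⊆ s)
    (hneg : ∀ x ∈ interior D, f' x < 0) : StrictAntiOn f D :=
  strictAntiOn_of_hasDerivWithinAt_neg hD (fun x hx ↦ (hf x (hDs hx)).continuousWithinAt.mono hDs)
    (fun x hx ↦ (hf x (hDs (interior_subset hx))).mono (interior_subset.trans hDs)) hneg

theorem exists_Icc_subset_of_mem_nhdsWithin_Icc {a b x : ℝ} {s : Set ℝ} (hab : a < b)
    (hx : x ∈ Icc a b) (hs : s ∈ nhdsWithin x (Icc a b)) :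
    ∃ p q, p < q ∧ x ∈ Icc p q ∧ Icc p q ⊆ Icc a b ∧ Ioo p q ⊆ s := by
  obtain ⟨u, hu, hus⟩ := mem_nhdsWithin_iff_exists_mem_nhds_inter.1 hs
  obtain ⟨l, r, hxlr, hlru⟩ := mem_nhds_iff_exists_Ioo_subset.1 hu
  refine ⟨max a l, min b r, max_lt (lt_min hab (hx.1.trans_lt hxlr.2))
    (lt_min (hxlr.1.trans_le hx.2) (hxlr.1.trans hxlr.2)),
    ⟨max_le hx.1 hxlr.1.le, le_min hx.2 hxlr.2.le⟩,
    Icc_subset_Icc (le_max_left _ _) (min_le_left _ _), fun y hy ↦ hus ⟨hlru ?_, ?_⟩⟩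
  · exact ⟨(le_max_right _ _).trans_lt hy.1, hy.2.trans_le (min_le_right _ _)⟩
  · exact ⟨(le_max_left _ _).trans hy.1.le, hy.2.le.trans (min_le_left _ _)⟩

theorem hasDerivWithinAt_eq_zero_of_isMaxOn_Icc {a b x₀ : ℝ} {w w' : ℝ → ℝ}
    (hw : ∀ x ∈ Icc a b, HasDerivWithinAt w (w' x) (Icc a b) x)
    (ha : w' a = 0) (hb : w' b = 0) (hx₀ : x₀ ∈ Icc a b) (hmax : IsMaxOn w (Icc a b) x₀) :
    w' x₀ = 0 := by
  rcases hx₀.1.eq_or_lt with rfl | hax₀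
  · exact ha
  rcases hx₀.2.eq_or_lt with rfl | hx₀b
  · exact hb
  have hnhds : Icc a b ∈ nhds x₀ := Icc_mem_nhds hax₀ hx₀b
  exact (hmax.isLocalMax hnhds).hasDerivAt_eq_zero ((hw x₀ hx₀).hasDerivAt hnhds)

theorem neumann_maximum_principle {a b M : ℝ} {w w' w'' : ℝ → ℝ} (hab : a < b)
    (hw : ∀ x ∈ Icc a b, HasDerivWithinAt w (w' x) (Icc a b) x)
    (hw' : ∀ x ∈ Icc a b, HasDerivWithinAt w' (w'' x) (Icc a b) x)
    (ha : w' a = 0) (hb : w' b = 0) (hpos : ∀ x ∈ Icc a b, M < w x → 0 < w'' x) :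
    ∀ x ∈ Icc a b, w x ≤ M := by
  by_contra! ⟨y, hy, hMy⟩
  have hcont : ContinuousOn w (Icc a b) := fun x hx ↦ (hw x hx).continuousWithinAt
  obtain ⟨x₀, hx₀, hmax⟩ := isCompact_Icc.exists_isMaxOn ⟨y, hy⟩ hcont
  have hw'x₀ : w' x₀ = 0 := hasDerivWithinAt_eq_zero_of_isMaxOn_Icc hw ha hb hx₀ hmax
  obtain ⟨p, q, hpq, hx₀pq, hsub, hM⟩ := exists_Icc_subset_of_mem_nhdsWithin_Icc hab hx₀
    (hcont x₀ hx₀ (Ioi_mem_nhds (hMy.trans_le (hmax hy))))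
  have hmono' : StrictMonoOn w' (Icc p q) :=
    .of_hasDerivWithinAt_pos_of_subset hw' (convex_Icc p q) hsub fun x hx ↦ by
      rw [interior_Icc] at hx
      exact hpos x (hsub (Ioo_subset_Icc_self hx)) (hM hx)
  -- `w'` increases through `w' x₀ = 0`, so `w` exceeds `w x₀` on one side of `x₀`
  rcases hx₀pq.2.lt_or_eq with hx₀q | rfl
  · have hmono : StrictMonoOn w (Icc x₀ q) :=
      .of_hasDerivWithinAt_pos_of_subset hw (convex_Icc x₀ q)
        ((Icc_subset_Icc_left hx₀pq.1).trans hsub) fun x hx ↦ by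
        rw [interior_Icc] at hx
        exact hw'x₀ ▸ hmono' ⟨hx₀pq.1, hx₀pq.2⟩ ⟨hx₀pq.1.trans hx.1.le, hx.2.le⟩ hx.1
    exact (hmono (left_mem_Icc.2 hx₀q.le) (right_mem_Icc.2 hx₀q.le) hx₀q).not_ge
      (hmax (hsub (right_mem_Icc.2 hpq.le)))
  · have hanti : StrictAntiOn w (Icc p x₀) :=
      .of_hasDerivWithinAt_neg_of_subset hw (convex_Icc p x₀) hsub fun x hx ↦ by
        rw [interior_Icc] at hx
        exact hw'x₀ ▸ hmono' ⟨hx.1.le, hx.2.le⟩ (right_mem_Icc.2 hpq.le) hx.2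
    exact (hanti (left_mem_Icc.2 hpq.le) (right_mem_Icc.2 hpq.le) hpq).not_ge
      (hmax (hsub (left_mem_Icc.2 hpq.le)))

theorem neumann_minimum_principle {a b m : ℝ} {w w' w'' : ℝ → ℝ} (hab : a < b)
    (hw : ∀ x ∈ Icc a b, HasDerivWithinAt w (w' x) (Icc a b) x)
    (hw' : ∀ x ∈ Icc a b, HasDerivWithinAt w' (w'' x) (Icc a b) x)
    (ha : w' a = 0) (hb : w' b = 0) (hneg : ∀ x ∈ Icc a b, w x < m → w'' x < 0) :
    ∀ x ∈ Icc a b, m ≤ w x := by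
  have := neumann_maximum_principle (w := -w) (w' := -w') (w'' := -w'') (M := -m) hab
    (fun x hx ↦ (hw x hx).neg) (fun x hx ↦ (hw' x hx).neg) (by simp [ha]) (by simp [hb])
    fun x hx h ↦ neg_pos.2 (hneg x hx (neg_lt_neg_iff.1 h))
  exact fun x hx ↦ neg_le_neg_iff.1 (this x hx)

theorem eqOn_zero_of_integral_eq_zero {a b : ℝ} {f : ℝ → ℝ} (hab : a < b)
    (hfc : ContinuousOn f (Icc a b)) (hf : ∀ x ∈ Icc a b, 0 ≤ f x)
    (h : ∫ x in a..b, f x = 0) : EqOn f 0 (Icc a b) := fun c hc ↦ by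
  by_contra hne
  exact (intervalIntegral.integral_pos hab hfc (fun x hx ↦ hf x (Ioc_subset_Icc_self hx))
    ⟨c, hc, (hf c hc).lt_of_ne' hne⟩).ne' h

theorem integral_eq_zero_of_neumann {a b : ℝ} {w' w'' : ℝ → ℝ} (hab : a ≤ b)
    (hw' : ∀ x ∈ Icc a b, HasDerivWithinAt w' (w'' x) (Icc a b) x)
    (hw'' : ContinuousOn w'' (Icc a b)) (ha : w' a = 0) (hb : w' b = 0) :
    ∫ x in a..b, w'' x = 0 := by
  rw [intervalIntegral.integral_eq_sub_of_hasDeriv_right_of_le hab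
    (fun x hx ↦ (hw' x hx).continuousWithinAt)
    (fun x hx ↦ ((hw' x (Ioo_subset_Icc_self hx)).hasDerivAt
      (Icc_mem_nhds hx.1 hx.2)).hasDerivWithinAt)
    (hw''.intervalIntegrable_of_Icc hab), ha, hb, sub_zero]

/-- The first reaction term is `scaledLogistic δ a₁ b₁ w₊`, the second one is
`γ * scaledLogistic γ a₂ c₂ w₋`. -/
noncomputable def scaledLogistic (κ a b u : ℝ) : ℝ := u / κ * (a - b * u / κ)

theorem continuous_scaledLogistic (κ a b : ℝ) : Continuous (scaledLogistic κ a b) := by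
  unfold scaledLogistic; fun_prop

@[simp]
theorem scaledLogistic_zero (κ a b : ℝ) : scaledLogistic κ a b 0 = 0 := by
  simp [scaledLogistic]

theorem scaledLogistic_nonneg {κ a b u : ℝ} (hκ : 0 < κ) (hb : 0 < b) (hu₀ : 0 ≤ u)
    (hu : u ≤ κ * a / b) : 0 ≤ scaledLogistic κ a b u := by
  rw [le_div_iff₀ hb] at hu
  refine mul_nonneg (div_nonneg hu₀ hκ.le) (sub_nonneg.2 ?_)
  rw [div_le_iff₀ hκ]
  linarith

theorem scaledLogistic_neg {κ a b u : ℝ} (hκ : 0 < κ) (ha : 0 < a) (hb : 0 < b)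
    (hu : κ * a / b < u) : scaledLogistic κ a b u < 0 := by
  have hu₀ : 0 < u := (by positivity : 0 < κ * a / b).trans hu
  rw [div_lt_iff₀ hb] at hu
  refine mul_neg_of_pos_of_neg (div_pos hu₀ hκ) (sub_neg.2 ?_)
  rw [lt_div_iff₀ hκ]
  linarith

theorem eq_zero_or_eq_of_scaledLogistic_eq_zero {κ a b u : ℝ} (hκ : κ ≠ 0) (hb : b ≠ 0)
    (h : scaledLogistic κ a b u = 0) : u = 0 ∨ u = κ * a / b := by
  rcases mul_eq_zero.1 h with h | h
  · exact .inl ((div_eq_zero_iff.1 h).resolve_right hκ)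
  · right
    field_simp at h ⊢
    linarith

theorem mem_of_scaledLogistic_max_eq_zero_of_scaledLogistic_min_eq_zero
    {κ a b κ' a' b' u : ℝ} (hκ : κ ≠ 0) (hb : b ≠ 0) (hκ' : κ' ≠ 0) (hb' : b' ≠ 0)
    (h : scaledLogistic κ a b (max u 0) = 0) (h' : scaledLogistic κ' a' b' (-min u 0) = 0) :
    u ∈ ({κ * a / b, 0, -(κ' * a' / b')} : Set ℝ) := by
  rcases le_total 0 u with hu | hu
  · rw [max_eq_left hu] at h
    rcases eq_zero_or_eq_of_scaledLogistic_eq_zero hκ hb h with h | h <;> simp [h]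
  · rw [min_eq_left hu] at h'
    rcases eq_zero_or_eq_of_scaledLogistic_eq_zero hκ' hb' h' with h | h
    · simp [neg_eq_zero.1 h]
    · simp [← h]

theorem mem_Icc_of_segregation {a₁ a₂ b₁ c₂ γ δ d : ℝ} (ha₁ : 0 < a₁) (ha₂ : 0 < a₂)
    (hb₁ : 0 < b₁) (hc₂ : 0 < c₂) (hγ : 0 < γ) (hδ : 0 < δ) (hd : 0 < d) {w w' w'' : ℝ → ℝ}
    (hw : ∀ x ∈ Icc (0:ℝ) 1, HasDerivWithinAt w (w' x) (Icc 0 1) x)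
    (hw' : ∀ x ∈ Icc (0:ℝ) 1, HasDerivWithinAt w' (w'' x) (Icc 0 1) x)
    (hbc0 : w' 0 = 0) (hbc1 : w' 1 = 0)
    (heq : ∀ x ∈ Icc (0:ℝ) 1, d * w'' x =
      γ * scaledLogistic γ a₂ c₂ (-min (w x) 0) - scaledLogistic δ a₁ b₁ (max (w x) 0)) :
    ∀ x ∈ Icc (0:ℝ) 1, w x ∈ Icc (-(γ * a₂ / c₂)) (δ * a₁ / b₁) := by
  have hlower := neumann_minimum_principle (m := -(γ * a₂ / c₂)) zero_lt_one hw hw' hbc0 hbc1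
      fun x hx hNx ↦ by
        have hwx : w x ≤ 0 := hNx.le.trans (neg_nonpos.2 (by positivity))
        have h := heq x hx
        rw [max_eq_right hwx, scaledLogistic_zero, min_eq_left hwx] at h
        nlinarith [scaledLogistic_neg hγ ha₂ hc₂ (lt_neg.1 hNx)]
  have hupper := neumann_maximum_principle (M := δ * a₁ / b₁) zero_lt_one hw hw' hbc0 hbc1
      fun x hx hMx ↦ by
        have hwx : 0 ≤ w x := (by positivity : 0 ≤ δ * a₁ / b₁).trans hMx.le
        have h := heq x hx
        rw [min_eq_right hwx, neg_zero, scaledLogistic_zero, max_eq_left hwx] at h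
        nlinarith [scaledLogistic_neg hδ ha₁ hb₁ hMx]
  exact fun x hx ↦ ⟨hlower x hx, hupper x hx⟩

theorem integral_scaledLogistic_eq_zero_of_segregation {a₁ a₂ b₁ c₂ γ δ d : ℝ} (hγ : 0 < γ)
    {w w' w'' : ℝ → ℝ} (hcont : ContinuousOn w (Icc 0 1))
    (hw' : ∀ x ∈ Icc (0:ℝ) 1, HasDerivWithinAt w' (w'' x) (Icc 0 1) x)
    (hw'' : ContinuousOn w'' (Icc 0 1)) (hbc0 : w' 0 = 0) (hbc1 : w' 1 = 0)
    (heq : ∀ x ∈ Icc (0:ℝ) 1, d * w'' x =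
      γ * scaledLogistic γ a₂ c₂ (-min (w x) 0) - scaledLogistic δ a₁ b₁ (max (w x) 0))
    (hint : ∫ x in (0:ℝ)..1, scaledLogistic δ a₁ b₁ (max (w x) 0) = 0) :
    ∫ x in (0:ℝ)..1, scaledLogistic γ a₂ c₂ (-min (w x) 0) = 0 := by
  have hcont₁ : ContinuousOn (fun x ↦ scaledLogistic δ a₁ b₁ (max (w x) 0)) (Icc 0 1) :=
    (continuous_scaledLogistic δ a₁ b₁).comp_continuousOn (hcont.sup continuousOn_const)
  have hEq : EqOn (fun x ↦ scaledLogistic γ a₂ c₂ (-min (w x) 0))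
      (fun x ↦ γ⁻¹ * (d * w'' x + scaledLogistic δ a₁ b₁ (max (w x) 0))) (uIcc 0 1) :=
    fun x hx ↦ by
      rw [uIcc_of_le zero_le_one] at hx
      simp only [heq x hx]
      field_simp
      ring
  rw [intervalIntegral.integral_congr hEq, intervalIntegral.integral_const_mul,
    intervalIntegral.integral_add ((hw''.intervalIntegrable_of_Icc zero_le_one).const_mul d)
      (hcont₁.intervalIntegrable_of_Icc zero_le_one),
    intervalIntegral.integral_const_mul,
    integral_eq_zero_of_neumann zero_le_one hw' hw'' hbc0 hbc1, hint, mul_zero, zero_add, mul_zero]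

theorem exists_eqOn_const_of_segregation {a₁ a₂ b₁ c₂ γ δ d : ℝ} (ha₁ : 0 < a₁)
    (ha₂ : 0 < a₂) (hb₁ : 0 < b₁) (hc₂ : 0 < c₂) (hγ : 0 < γ) (hδ : 0 < δ) (hd : 0 < d)
    {w w' w'' : ℝ → ℝ}
    (hw : ∀ x ∈ Icc (0:ℝ) 1, HasDerivWithinAt w (w' x) (Icc 0 1) x)
    (hw' : ∀ x ∈ Icc (0:ℝ) 1, HasDerivWithinAt w' (w'' x) (Icc 0 1) x)
    (hw'' : ContinuousOn w'' (Icc 0 1)) (hbc0 : w' 0 = 0) (hbc1 : w' 1 = 0)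
    (heq : ∀ x ∈ Icc (0:ℝ) 1, d * w'' x =
      γ * scaledLogistic γ a₂ c₂ (-min (w x) 0) - scaledLogistic δ a₁ b₁ (max (w x) 0))
    (hint : ∫ x in (0:ℝ)..1, scaledLogistic δ a₁ b₁ (max (w x) 0) = 0) :
    ∃ c ∈ ({δ * a₁ / b₁, 0, -(γ * a₂ / c₂)} : Set ℝ), EqOn w (fun _ ↦ c) (Icc 0 1) := by
  have hcont : ContinuousOn w (Icc 0 1) := fun x hx ↦ (hw x hx).continuousWithinAt
  have hbounds := mem_Icc_of_segregation ha₁ ha₂ hb₁ hc₂ hγ hδ hd hw hw' hbc0 hbc1 heq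
  have h₁ := eqOn_zero_of_integral_eq_zero zero_lt_one
    ((continuous_scaledLogistic δ a₁ b₁).comp_continuousOn (hcont.sup continuousOn_const))
    (fun x hx ↦ scaledLogistic_nonneg hδ hb₁ (le_max_right _ _)
      (max_le (hbounds x hx).2 (by positivity))) hint
  have h₂ := eqOn_zero_of_integral_eq_zero zero_lt_one
    ((continuous_scaledLogistic γ a₂ c₂).comp_continuousOn (hcont.inf continuousOn_const).neg)
    (fun x hx ↦ scaledLogistic_nonneg hγ hc₂ (neg_nonneg.2 (min_le_right _ _))
      (neg_le.1 (le_min (hbounds x hx).1 (neg_nonpos.2 (by positivity)))))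
    (integral_scaledLogistic_eq_zero_of_segregation hγ hcont hw' hw'' hbc0 hbc1 heq hint)
  have hvals : MapsTo w (Icc 0 1) {δ * a₁ / b₁, 0, -(γ * a₂ / c₂)} := fun x hx ↦
    mem_of_scaledLogistic_max_eq_zero_of_scaledLogistic_min_eq_zero hδ.ne' hb₁.ne' hγ.ne'
      hc₂.ne' (h₁ hx) (h₂ hx)
  exact isPreconnected_Icc.eqOn_const_of_mapsTo (toFinite _).isDiscrete hcont hvals
    (insert_nonempty _ _)

theorem stmt_2_general (a₁ a₂ b₁ c₂ γ δ : ℝ)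
    (ha₁ : 0 < a₁) (ha₂ : 0 < a₂) (hb₁ : 0 < b₁)
    (hc₂ : 0 < c₂) (hγ : 0 < γ) (hδ : 0 < δ)
    (d : ℝ) (hd : 0 < d)
    (w w' w'' : ℝ → ℝ)
    (hw : ∀ x ∈ Icc (0:ℝ) 1, HasDerivWithinAt w (w' x) (Icc 0 1) x)
    (hw' : ∀ x ∈ Icc (0:ℝ) 1, HasDerivWithinAt w' (w'' x) (Icc 0 1) x)
    (hw'' : ContinuousOn w'' (Icc 0 1))
    (hbc0 : w' 0 = 0) (hbc1 : w' 1 = 0)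
    (heq : ∀ x ∈ Icc (0:ℝ) 1,
      d * w'' x + (max (w x) 0 / δ) * (a₁ - b₁ * max (w x) 0 / δ)
        - (-min (w x) 0) * (a₂ - c₂ * (-min (w x) 0) / γ) = 0)
    (hint : ∫ x in (0:ℝ)..1,
      (max (w x) 0 / δ) * (a₁ - b₁ * max (w x) 0 / δ) = 0) :
    (∀ x ∈ Icc (0:ℝ) 1, w x = δ * a₁ / b₁) ∨
    (∀ x ∈ Icc (0:ℝ) 1, w x = 0) ∨
    (∀ x ∈ Icc (0:ℝ) 1, w x = -(γ * a₂ / c₂)) := by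
  have hreact : ∀ x ∈ Icc (0:ℝ) 1, d * w'' x =
      γ * scaledLogistic γ a₂ c₂ (-min (w x) 0) - scaledLogistic δ a₁ b₁ (max (w x) 0) := by
    intro x hx
    rw [scaledLogistic, scaledLogistic, ← mul_assoc, mul_div_cancel₀ _ hγ.ne']
    linarith [heq x hx]
  obtain ⟨c, hc, hwc⟩ := exists_eqOn_const_of_segregation ha₁ ha₂ hb₁ hc₂ hγ hδ hd hw hw' hw''
    hbc0 hbc1 hreact hint
  rcases hc with rfl | rfl | rfl
  exacts [.inl hwc, .inr (.inl hwc), .inr (.inr hwc)]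

/-- Proposition 2.2 in dimension one: every solution of the complete-segregation
limiting system on `(0,1)` is one of the three constants
`δa₁/b₁`, `0`, `−γa₂/c₂`. -/
theorem stmt_2 (a₁ a₂ b₁ b₂ c₁ c₂ γ δ : ℝ)
    (ha₁ : 0 < a₁) (ha₂ : 0 < a₂) (hb₁ : 0 < b₁) (hb₂ : 0 < b₂)
    (hc₁ : 0 < c₁) (hc₂ : 0 < c₂) (hγ : 0 < γ) (hδ : 0 < δ)
    (d : ℝ) (hd : 0 < d)
    (w w' w'' : ℝ → ℝ)
    (hw : ∀ x ∈ Icc (0:ℝ) 1, HasDerivWithinAt w (w' x) (Icc 0 1) x)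
    (hw' : ∀ x ∈ Icc (0:ℝ) 1, HasDerivWithinAt w' (w'' x) (Icc 0 1) x)
    (hw'' : ContinuousOn w'' (Icc 0 1))
    (hbc0 : w' 0 = 0) (hbc1 : w' 1 = 0)
    (heq : ∀ x ∈ Icc (0:ℝ) 1,
      d * w'' x + (max (w x) 0 / δ) * (a₁ - b₁ * max (w x) 0 / δ)
        - (-min (w x) 0) * (a₂ - c₂ * (-min (w x) 0) / γ) = 0)
    (hint : ∫ x in (0:ℝ)..1,
      (max (w x) 0 / δ) * (a₁ - b₁ * max (w x) 0 / δ) = 0) :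
    (∀ x ∈ Icc (0:ℝ) 1, w x = δ * a₁ / b₁) ∨
    (∀ x ∈ Icc (0:ℝ) 1, w x = 0) ∨
    (∀ x ∈ Icc (0:ℝ) 1, w x = -(γ * a₂ / c₂)) :=
  stmt_2_general a₁ a₂ b₁ c₂ γ δ ha₁ ha₂ hb₁ hc₂ hγ hδ d hd w w' w'' hw hw' hw'' hbc0 hbc1 heq hint
end

section
/- Let τ > 0 and let u : [0,1] → ℝ be continuous with u(x) > 0 for all x ∈ [0,1]. Assume the two integral constraints ∫₀¹ (u(x)·(a₁ − b₁·u(x)) − c₁τ) dx = 0 and ∫₀¹ (τ/u(x))·(a₂ − b₂·u(x) − c₂·τ/u(x)) dx = 0. Then τ ≤ min{ a₁²/(4b₁c₁), a₂²/(4b₂c₂) }. -/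
open Set

/-! Both integrands are bounded pointwise by a downward parabola's maximum: with `v = τ / u`,
`u (a₁ - b₁ u) ≤ a₁² / (4 b₁)` and `g(u, v) = v (a₂ - c₂ v) - b₂ τ ≤ a₂² / (4 c₂) - b₂ τ`.
Integrating over `[0, 1]` against the vanishing constraints gives `c₁ τ ≤ a₁² / (4 b₁)` and
`b₂ τ ≤ a₂² / (4 c₂)`. -/

theorem mul_sub_mul_le_sq_div (a : ℝ) {b : ℝ} (hb : 0 < b) (t : ℝ) :
    t * (a - b * t) ≤ a ^ 2 / (4 * b) := by
  rw [le_div_iff₀ (by positivity)]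
  nlinarith [sq_nonneg (2 * b * t - a)]

theorem div_mul_sub_eq {τ u : ℝ} (hu : u ≠ 0) (a b c : ℝ) :
    τ / u * (a - b * u - c * τ / u) = τ / u * (a - c * (τ / u)) - b * τ := by
  field_simp
  ring

theorem nonneg_of_intervalIntegral_eq_zero_of_le {f : ℝ → ℝ} {a b C : ℝ} (hab : a < b)
    (hf : IntervalIntegrable f MeasureTheory.volume a b) (hle : ∀ x ∈ Icc a b, f x ≤ C)
    (h0 : ∫ x in a..b, f x = 0) : 0 ≤ C := by
  have hmono := intervalIntegral.integral_mono_on hab.le hf intervalIntegrable_const hle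
  rw [h0, intervalIntegral.integral_const, smul_eq_mul] at hmono
  exact nonneg_of_mul_nonneg_right hmono (sub_pos.mpr hab)

theorem le_sq_div_of_mul_le {a b c τ : ℝ} (hc : 0 < c)
    (h : c * τ ≤ a ^ 2 / (4 * b)) : τ ≤ a ^ 2 / (4 * b * c) := by
  rw [← div_div, le_div_iff₀ hc]
  linarith

theorem stmt_3_general (a₁ a₂ b₁ b₂ c₁ c₂ : ℝ)
    (hb₁ : 0 < b₁) (hb₂ : 0 < b₂)
    (hc₁ : 0 < c₁) (hc₂ : 0 < c₂)
    (τ : ℝ)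
    (u : ℝ → ℝ) (hu : ContinuousOn u (Icc 0 1))
    (hupos : ∀ x ∈ Icc (0:ℝ) 1, 0 < u x)
    (hint1 : ∫ x in (0:ℝ)..1, (u x * (a₁ - b₁ * u x) - c₁ * τ) = 0)
    (hint2 : ∫ x in (0:ℝ)..1,
      (τ / u x) * (a₂ - b₂ * u x - c₂ * τ / u x) = 0) :
    τ ≤ min (a₁ ^ 2 / (4 * b₁ * c₁)) (a₂ ^ 2 / (4 * b₂ * c₂)) := by
  have hu' : ContinuousOn u (uIcc 0 1) := by rwa [uIcc_of_le zero_le_one]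
  have hune : ∀ x ∈ uIcc (0:ℝ) 1, u x ≠ 0 := fun x hx =>
    (hupos x (by rwa [uIcc_of_le zero_le_one] at hx)).ne'
  refine le_min (le_sq_div_of_mul_le hc₁ ?_) ?_
  · have hgap₁ := nonneg_of_intervalIntegral_eq_zero_of_le zero_lt_one
      (ContinuousOn.intervalIntegrable (by fun_prop))
      (fun x _ => sub_le_sub_right (mul_sub_mul_le_sq_div a₁ hb₁ (u x)) _) hint1
    linarith
  · rw [mul_right_comm]
    refine le_sq_div_of_mul_le hb₂ ?_
    have hgap₂ := nonneg_of_intervalIntegral_eq_zero_of_le zero_lt_one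
      (ContinuousOn.intervalIntegrable (by fun_prop (disch := exact hune)))
      (fun x hx => (div_mul_sub_eq (hupos x hx).ne' a₂ b₂ c₂).trans_le
        (sub_le_sub_right (mul_sub_mul_le_sq_div a₂ hc₂ (τ / u x)) _)) hint2
    linarith

/-- A priori bound on the segregation constant `τ` (part of Theorem 3.1 / Lemma 4.1):
the two integral constraints `∫ f(u, τ/u) = 0` and `∫ g(u, τ/u) = 0` force
`τ ≤ min (a₁²/(4b₁c₁)) (a₂²/(4b₂c₂))`. -/
theorem stmt_3 (a₁ a₂ b₁ b₂ c₁ c₂ : ℝ)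
    (ha₁ : 0 < a₁) (ha₂ : 0 < a₂) (hb₁ : 0 < b₁) (hb₂ : 0 < b₂)
    (hc₁ : 0 < c₁) (hc₂ : 0 < c₂)
    (τ : ℝ) (hτ : 0 < τ)
    (u : ℝ → ℝ) (hu : ContinuousOn u (Icc 0 1))
    (hupos : ∀ x ∈ Icc (0:ℝ) 1, 0 < u x)
    (hint1 : ∫ x in (0:ℝ)..1, (u x * (a₁ - b₁ * u x) - c₁ * τ) = 0)
    (hint2 : ∫ x in (0:ℝ)..1,
      (τ / u x) * (a₂ - b₂ * u x - c₂ * τ / u x) = 0) :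
    τ ≤ min (a₁ ^ 2 / (4 * b₁ * c₁)) (a₂ ^ 2 / (4 * b₂ * c₂)) :=
  stmt_3_general a₁ a₂ b₁ b₂ c₁ c₂ hb₁ hb₂ hc₁ hc₂ τ u hu hupos hint1 hint2
end

section
/- There exists a constant C* > 0, depending only on a₁, a₂, b₁, b₂, c₁, c₂, γ, δ, such that for every d > 0 and every solution (w, τ) of the one-dimensional limiting system with diffusion coefficient d, one has max_{x ∈ [0,1]} |w(x)| ≤ C* and τ ≤ min{ a₁²/(4b₁c₁), a₂²/(4b₂c₂) }. -/
/-!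
Write `u = U(w, τ)`, so that `w = δu - γτ/u` and `w ↦ u` is increasing. The integral constraint,
and the equation integrated over `[0, 1]` using the Neumann conditions, give points where
`b₁u + c₁τ/u ≤ a₁` and `b₂u + c₂τ/u ≤ a₂`; by AM–GM each gives one of the bounds on `τ`.
At a maximum of `w` the maximum principle gives `h(u, τ) ≥ 0`, which for `τ` bounded forces `u`
to be bounded, hence `w ≤ δu` is bounded above. At a minimum `h(u, τ) ≤ 0`, and with `u` now
bounded this is a quadratic inequality bounding `γτ/u`, hence `w ≥ -γτ/u` is bounded below.
-/

open Set

/-- The nonlinearity `h(u,τ) = u(a₁ − b₁u) − c₁τ − (γτ/u)(a₂ − b₂u − c₂τ/u)`. -/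
noncomputable def hfun (a₁ a₂ b₁ b₂ c₁ c₂ γ : ℝ) (u τ : ℝ) : ℝ :=
  u * (a₁ - b₁ * u) - c₁ * τ - (γ * τ / u) * (a₂ - b₂ * u - c₂ * τ / u)

/-- The change of variables `U(w,τ) = (√(w² + 4γδτ) + w)/(2δ)`. -/
noncomputable def Ufun (γ δ : ℝ) (w τ : ℝ) : ℝ :=
  (Real.sqrt (w ^ 2 + 4 * γ * δ * τ) + w) / (2 * δ)

section MaximumPrinciple

variable {f f' f'' : ℝ → ℝ} {a b x₀ : ℝ}

theorem strictConvexOn_of_hasDerivWithinAt2_pos {D : Set ℝ} (hD : Convex ℝ D)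
    (hf : ∀ x ∈ D, HasDerivWithinAt f (f' x) D x)
    (hf' : ∀ x ∈ D, HasDerivWithinAt f' (f'' x) D x) (hf'' : ∀ x ∈ D, 0 < f'' x) :
    StrictConvexOn ℝ D f := by
  have hmono : StrictMonoOn f' D :=
    strictMonoOn_of_hasDerivWithinAt_pos hD (fun x hx => (hf' x hx).continuousWithinAt)
      (fun x hx => (hf' x (interior_subset hx)).mono interior_subset)
      (fun x hx => hf'' x (interior_subset hx))
  have hderiv : EqOn (deriv f) f' (interior D) :=
    deriv_eqOn isOpen_interior fun x hx => (hf x (interior_subset hx)).mono interior_subset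
  exact StrictMonoOn.strictConvexOn_of_deriv hD (fun x hx => (hf x hx).continuousWithinAt)
    ((hmono.mono interior_subset).congr hderiv.symm)

theorem IsMaxOn.hasDerivWithinAt_Icc_eq_zero (hmax : IsMaxOn f (Icc a b) x₀)
    (hx₀ : x₀ ∈ Icc a b) (hf : HasDerivWithinAt f (f' x₀) (Icc a b) x₀)
    (ha : f' a = 0) (hb : f' b = 0) : f' x₀ = 0 := by
  rcases hx₀.1.eq_or_lt with rfl | hax
  · exact ha
  rcases hx₀.2.eq_or_lt with rfl | hxb
  · exact hb
  have hmem : Icc a b ∈ nhds x₀ := Icc_mem_nhds hax hxb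
  exact (hmax.isLocalMax hmem).hasDerivAt_eq_zero (hf.hasDerivAt hmem)

theorem secondDeriv_nonpos_of_isMaxOn_Icc (hab : a < b) (hmax : IsMaxOn f (Icc a b) x₀)
    (hx₀ : x₀ ∈ Icc a b) (hf : ∀ x ∈ Icc a b, HasDerivWithinAt f (f' x) (Icc a b) x)
    (hf' : ∀ x ∈ Icc a b, HasDerivWithinAt f' (f'' x) (Icc a b) x)
    (hf'' : ContinuousOn f'' (Icc a b)) (ha : f' a = 0) (hb : f' b = 0) : f'' x₀ ≤ 0 := by
  have h₀ : f' x₀ = 0 := hmax.hasDerivWithinAt_Icc_eq_zero hx₀ (hf x₀ hx₀) ha hb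
  -- If `f'' x₀ > 0`, then `f` is strictly convex near `x₀` with a critical point there.
  by_contra! hpos
  obtain ⟨ε, hε, hball⟩ :=
    Metric.mem_nhdsWithin_iff.1 ((hf'' x₀ hx₀).eventually (lt_mem_nhds hpos))
  set p := max a (x₀ - ε / 2)
  set q := min b (x₀ + ε / 2)
  have hJ : Icc p q ⊆ Icc a b := Icc_subset_Icc (le_max_left _ _) (min_le_left _ _)
  have hpq : p < q :=
    max_lt (lt_min hab (by linarith [hx₀.1])) (lt_min (by linarith [hx₀.2]) (by linarith))
  have hx₀J : x₀ ∈ Icc p q := ⟨max_le hx₀.1 (by linarith), le_min hx₀.2 (by linarith)⟩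
  have hconv : StrictConvexOn ℝ (Icc p q) f := by
    refine strictConvexOn_of_hasDerivWithinAt2_pos (convex_Icc p q)
      (fun x hx => (hf x (hJ hx)).mono hJ) (fun x hx => (hf' x (hJ hx)).mono hJ)
      fun x hx => hball ⟨?_, hJ hx⟩
    rw [Metric.mem_ball, Real.dist_eq, abs_lt]
    constructor <;> linarith [hx.1, hx.2, le_max_right a (x₀ - ε / 2), min_le_right b (x₀ + ε / 2)]
  have hf₀ : HasDerivWithinAt f 0 (Icc p q) x₀ := h₀ ▸ (hf x₀ hx₀).mono hJ
  rcases hx₀J.2.lt_or_eq with hlt | hq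
  · have := hconv.lt_slope_of_hasDerivWithinAt hx₀J (right_mem_Icc.2 hpq.le) hlt hf₀
    rw [slope_def_field, div_pos_iff_of_pos_right (by linarith)] at this
    linarith [isMaxOn_iff.1 hmax q (hJ (right_mem_Icc.2 hpq.le))]
  · have := hconv.slope_lt_of_hasDerivWithinAt (left_mem_Icc.2 hpq.le) hx₀J (hq ▸ hpq) hf₀
    rw [slope_def_field, div_lt_iff₀ (by linarith), zero_mul] at this
    linarith [isMaxOn_iff.1 hmax p (hJ (left_mem_Icc.2 hpq.le))]

theorem secondDeriv_nonneg_of_isMinOn_Icc (hab : a < b) (hmin : IsMinOn f (Icc a b) x₀)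
    (hx₀ : x₀ ∈ Icc a b) (hf : ∀ x ∈ Icc a b, HasDerivWithinAt f (f' x) (Icc a b) x)
    (hf' : ∀ x ∈ Icc a b, HasDerivWithinAt f' (f'' x) (Icc a b) x)
    (hf'' : ContinuousOn f'' (Icc a b)) (ha : f' a = 0) (hb : f' b = 0) : 0 ≤ f'' x₀ := by
  have := secondDeriv_nonpos_of_isMaxOn_Icc (f' := -f') (f'' := -f'') hab hmin.neg hx₀
    (fun x hx => (hf x hx).neg) (fun x hx => (hf' x hx).neg) hf''.neg (by simp [ha]) (by simp [hb])
  simpa using this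

end MaximumPrinciple

section Algebra

variable {a₁ a₂ b₁ b₂ c₁ c₂ γ δ T τ u w : ℝ}

theorem Ufun_pos (hγ : 0 < γ) (hδ : 0 < δ) (hτ : 0 < τ) : 0 < Ufun γ δ w τ := by
  have hw : |w| < Real.sqrt (w ^ 2 + 4 * γ * δ * τ) := by
    rw [← Real.sqrt_sq_eq_abs]
    exact Real.sqrt_lt_sqrt (sq_nonneg w) (by nlinarith [mul_pos (mul_pos hγ hδ) hτ])
  exact div_pos (by linarith [neg_abs_le w]) (by positivity)

theorem Ufun_spec (hγ : 0 < γ) (hδ : 0 < δ) (hτ : 0 < τ) :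
    δ * Ufun γ δ w τ - γ * τ / Ufun γ δ w τ = w := by
  have hU := Ufun_pos (w := w) hγ hδ hτ
  have hsq : Real.sqrt (w ^ 2 + 4 * γ * δ * τ) ^ 2 = w ^ 2 + 4 * γ * δ * τ :=
    Real.sq_sqrt (by nlinarith [mul_pos (mul_pos hγ hδ) hτ])
  rw [sub_eq_iff_eq_add, ← sub_eq_iff_eq_add', eq_div_iff hU.ne']
  unfold Ufun
  set r := Real.sqrt (w ^ 2 + 4 * γ * δ * τ)
  field_simp
  linear_combination hsq

theorem Ufun_mono (hγ : 0 < γ) (hδ : 0 < δ) (hτ : 0 < τ) : Monotone fun w => Ufun γ δ w τ := by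
  intro w₁ w₂ hw
  by_contra! hlt
  have h₁ := Ufun_spec (w := w₁) hγ hδ hτ
  have h₂ := Ufun_spec (w := w₂) hγ hδ hτ
  have : γ * τ / Ufun γ δ w₁ τ < γ * τ / Ufun γ δ w₂ τ :=
    div_lt_div_of_pos_left (by positivity) (Ufun_pos hγ hδ hτ) hlt
  nlinarith

theorem le_sq_div_of_add_div_le {a b c : ℝ} (hb : 0 < b) (hc : 0 < c) (hu : 0 < u) (hτ : 0 ≤ τ)
    (h : b * u + c * τ / u ≤ a) : τ ≤ a ^ 2 / (4 * b * c) := by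
  have hprod : (b * u) * (c * τ / u) = b * c * τ := by field_simp
  have hsum : 0 ≤ b * u + c * τ / u := by positivity
  rw [le_div_iff₀ (by positivity)]
  nlinarith [sq_nonneg (b * u - c * τ / u), mul_le_mul h h hsum (hsum.trans h)]

theorem le_max_one_of_hfun_nonneg (ha₂ : 0 < a₂) (hb₁ : 0 < b₁) (hb₂ : 0 < b₂) (hc₁ : 0 < c₁)
    (hc₂ : 0 < c₂) (hγ : 0 < γ) (hτ : 0 < τ) (hτT : τ ≤ T) (hu : 0 < u)
    (h : 0 ≤ hfun a₁ a₂ b₁ b₂ c₁ c₂ γ u τ) :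
    u ≤ max 1 ((a₁ + γ * b₂ * T + γ * c₂ * T ^ 2) / b₁) := by
  rcases le_or_gt u 1 with hu1 | hu1
  · exact le_max_of_le_left hu1
  refine le_max_of_le_right ((le_div_iff₀ hb₁).2 ?_)
  have hs : 0 < τ / u := div_pos hτ hu
  have hsT : τ / u ≤ T := (div_le_self hτ.le hu1.le).trans hτT
  have hexp : hfun a₁ a₂ b₁ b₂ c₁ c₂ γ u τ = u * (a₁ - b₁ * u) - c₁ * τ + γ * b₂ * τ
      - γ * a₂ * (τ / u) + γ * c₂ * (τ / u) ^ 2 := by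
    unfold hfun; field_simp; ring
  have hτu : γ * b₂ * τ ≤ γ * b₂ * T * u := by
    rw [mul_assoc _ T]; gcongr; nlinarith
  have hsu : γ * c₂ * (τ / u) ^ 2 ≤ γ * c₂ * T ^ 2 * u := by
    rw [mul_assoc _ (T ^ 2)]; gcongr; nlinarith [pow_le_pow_left₀ hs.le hsT 2]
  have : 0 ≤ u * (a₁ + γ * b₂ * T + γ * c₂ * T ^ 2 - b₁ * u) := by
    nlinarith [mul_pos hγ (mul_pos ha₂ hs), mul_pos hc₁ hτ]
  nlinarith [(mul_nonneg_iff_of_pos_left hu).1 this]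

theorem div_le_max_one_of_hfun_nonpos {M : ℝ} (ha₁ : 0 < a₁) (hb₁ : 0 < b₁) (hb₂ : 0 < b₂)
    (hc₁ : 0 < c₁) (hc₂ : 0 < c₂) (hγ : 0 < γ) (hτ : 0 < τ) (hτT : τ ≤ T) (hu : 0 < u)
    (huM : u ≤ M)
    (h : hfun a₁ a₂ b₁ b₂ c₁ c₂ γ u τ ≤ 0) :
    γ * τ / u ≤ max 1 (γ * (b₁ * M ^ 2 + c₁ * T + a₂) / c₂) := by
  set s := γ * τ / u with hs_def
  rcases le_or_gt s 1 with hs1 | hs1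
  · exact le_max_of_le_left hs1
  refine le_max_of_le_right ((le_div_iff₀ hc₂).2 ?_)
  have hexp : γ * hfun a₁ a₂ b₁ b₂ c₁ c₂ γ u τ = γ * (u * (a₁ - b₁ * u) - c₁ * τ + γ * b₂ * τ
      - a₂ * s) + c₂ * s ^ 2 := by
    rw [hs_def]; unfold hfun; field_simp; ring
  have hγh : γ * hfun a₁ a₂ b₁ b₂ c₁ c₂ γ u τ ≤ 0 := mul_nonpos_of_nonneg_of_nonpos hγ.le h
  have hs : 0 < s := by positivity
  have huM2 : b₁ * u ^ 2 ≤ b₁ * M ^ 2 := by gcongr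
  have hB : 0 ≤ b₁ * M ^ 2 + c₁ * T := by nlinarith
  have hquad : c₂ * s ^ 2 ≤ γ * (b₁ * M ^ 2 + c₁ * T + a₂ * s) := by
    have : c₂ * s ^ 2 ≤ γ * (b₁ * u ^ 2 + c₁ * τ + a₂ * s) := by
      nlinarith [mul_pos hγ (mul_pos ha₁ hu), mul_pos hγ (mul_pos hγ (mul_pos hb₂ hτ))]
    nlinarith [mul_le_mul_of_nonneg_left hτT hc₁.le]
  have : c₂ * s ^ 2 ≤ γ * (b₁ * M ^ 2 + c₁ * T + a₂) * s := by
    nlinarith [mul_le_mul_of_nonneg_left hs1.le (mul_nonneg hγ.le hB)]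
  nlinarith

end Algebra

theorem exists_nonneg_of_integral_eq_zero {f : ℝ → ℝ} {a b : ℝ} (hab : a < b)
    (hf : ContinuousOn f (Icc a b)) (h : ∫ x in a..b, f x = 0) : ∃ x ∈ Icc a b, 0 ≤ f x := by
  by_contra! hneg
  have hint : IntervalIntegrable (fun x => -f x) MeasureTheory.volume a b :=
    hf.neg.intervalIntegrable_of_Icc hab.le
  have := intervalIntegral.intervalIntegral_pos_of_pos_on hint
    (fun x hx => neg_pos.2 (hneg x (Ioo_subset_Icc_self hx))) hab
  rw [intervalIntegral.integral_neg, h, neg_zero] at this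
  exact this.false

structure IsLimitingSolution (a₁ a₂ b₁ b₂ c₁ c₂ γ δ d τ : ℝ) (w w' w'' : ℝ → ℝ) : Prop where
  tau_pos : 0 < τ
  hasDerivWithinAt : ∀ x ∈ Icc (0:ℝ) 1, HasDerivWithinAt w (w' x) (Icc 0 1) x
  hasDerivWithinAt' : ∀ x ∈ Icc (0:ℝ) 1, HasDerivWithinAt w' (w'' x) (Icc 0 1) x
  continuousOn'' : ContinuousOn w'' (Icc 0 1)
  equation : ∀ x ∈ Icc (0:ℝ) 1,
    d * w'' x + hfun a₁ a₂ b₁ b₂ c₁ c₂ γ (Ufun γ δ (w x) τ) τ = 0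
  deriv_zero : w' 0 = 0
  deriv_one : w' 1 = 0
  integral_eq_zero :
    ∫ x in (0:ℝ)..1, (Ufun γ δ (w x) τ * (a₁ - b₁ * Ufun γ δ (w x) τ) - c₁ * τ) = 0

namespace IsLimitingSolution

variable {a₁ a₂ b₁ b₂ c₁ c₂ γ δ d τ T : ℝ} {w w' w'' : ℝ → ℝ}

theorem continuousOn (hs : IsLimitingSolution a₁ a₂ b₁ b₂ c₁ c₂ γ δ d τ w w' w'') :
    ContinuousOn w (Icc 0 1) :=
  fun x hx => (hs.hasDerivWithinAt x hx).continuousWithinAt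

theorem continuousOn_Ufun (hs : IsLimitingSolution a₁ a₂ b₁ b₂ c₁ c₂ γ δ d τ w w' w'') :
    ContinuousOn (fun x => Ufun γ δ (w x) τ) (Icc 0 1) := by
  have := hs.continuousOn
  unfold Ufun
  fun_prop

theorem integral_secondDeriv (hs : IsLimitingSolution a₁ a₂ b₁ b₂ c₁ c₂ γ δ d τ w w' w'') :
    ∫ x in (0:ℝ)..1, w'' x = 0 := by
  have hderiv : ∀ x ∈ Ioo (0:ℝ) 1, HasDerivAt w' (w'' x) x := fun x hx =>
    (hs.hasDerivWithinAt' x (Ioo_subset_Icc_self hx)).hasDerivAt (Icc_mem_nhds hx.1 hx.2)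
  rw [intervalIntegral.integral_eq_sub_of_hasDerivAt_of_le zero_le_one
    (fun x hx => (hs.hasDerivWithinAt' x hx).continuousWithinAt) hderiv
    (hs.continuousOn''.intervalIntegrable_of_Icc zero_le_one), hs.deriv_zero, hs.deriv_one,
    sub_zero]

theorem tau_le_left (hs : IsLimitingSolution a₁ a₂ b₁ b₂ c₁ c₂ γ δ d τ w w' w'')
    (hb₁ : 0 < b₁) (hc₁ : 0 < c₁) (hγ : 0 < γ) (hδ : 0 < δ) :
    τ ≤ a₁ ^ 2 / (4 * b₁ * c₁) := by
  obtain ⟨x, -, hx⟩ := exists_nonneg_of_integral_eq_zero zero_lt_one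
    (by have := hs.continuousOn_Ufun; fun_prop) hs.integral_eq_zero
  have hu := Ufun_pos (w := w x) hγ hδ hs.tau_pos
  refine le_sq_div_of_add_div_le hb₁ hc₁ hu hs.tau_pos.le ?_
  rw [← le_sub_iff_add_le', div_le_iff₀ hu]
  linarith

theorem tau_le_right (hs : IsLimitingSolution a₁ a₂ b₁ b₂ c₁ c₂ γ δ d τ w w' w'')
    (hb₂ : 0 < b₂) (hc₂ : 0 < c₂) (hγ : 0 < γ) (hδ : 0 < δ) :
    τ ≤ a₂ ^ 2 / (4 * b₂ * c₂) := by
  set u := fun x => Ufun γ δ (w x) τ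
  have hu_cont := hs.continuousOn_Ufun
  have hw''_cont := hs.continuousOn''
  have hint : ∫ x in (0:ℝ)..1, (u x * (a₁ - b₁ * u x) - c₁ * τ + d * w'' x) = 0 := by
    rw [intervalIntegral.integral_add, hs.integral_eq_zero, intervalIntegral.integral_const_mul,
      hs.integral_secondDeriv, mul_zero, add_zero]
    all_goals exact ContinuousOn.intervalIntegrable_of_Icc zero_le_one (by fun_prop)
  obtain ⟨x, hx, hgx⟩ :=
    exists_nonneg_of_integral_eq_zero zero_lt_one (by fun_prop) hint
  have hu : 0 < u x := Ufun_pos hγ hδ hs.tau_pos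
  have hval : u x * (a₁ - b₁ * u x) - c₁ * τ + d * w'' x
      = γ * τ / u x * (a₂ - b₂ * u x - c₂ * τ / u x) := by
    have := hs.equation x hx
    unfold hfun at this
    linarith
  rw [hval] at hgx
  have := nonneg_of_mul_nonneg_right hgx (div_pos (mul_pos hγ hs.tau_pos) hu)
  exact le_sq_div_of_add_div_le hb₂ hc₂ hu hs.tau_pos.le (by linarith)

theorem Ufun_le (hs : IsLimitingSolution a₁ a₂ b₁ b₂ c₁ c₂ γ δ d τ w w' w'')
    (ha₂ : 0 < a₂) (hb₁ : 0 < b₁) (hb₂ : 0 < b₂) (hc₁ : 0 < c₁) (hc₂ : 0 < c₂) (hγ : 0 < γ)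
    (hδ : 0 < δ) (hd : 0 < d) (hτT : τ ≤ T) :
    ∀ x ∈ Icc (0:ℝ) 1, Ufun γ δ (w x) τ ≤ max 1 ((a₁ + γ * b₂ * T + γ * c₂ * T ^ 2) / b₁) := by
  obtain ⟨x₀, hx₀, hmax⟩ :=
    isCompact_Icc.exists_isMaxOn (nonempty_Icc.2 zero_le_one) hs.continuousOn
  have hw'' : w'' x₀ ≤ 0 := secondDeriv_nonpos_of_isMaxOn_Icc zero_lt_one hmax hx₀
    hs.hasDerivWithinAt hs.hasDerivWithinAt' hs.continuousOn'' hs.deriv_zero hs.deriv_one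
  have hh : 0 ≤ hfun a₁ a₂ b₁ b₂ c₁ c₂ γ (Ufun γ δ (w x₀) τ) τ := by
    nlinarith [hs.equation x₀ hx₀, mul_nonpos_of_nonneg_of_nonpos hd.le hw'']
  intro x hx
  exact (Ufun_mono hγ hδ hs.tau_pos (hmax hx)).trans <| le_max_one_of_hfun_nonneg ha₂ hb₁ hb₂
    hc₁ hc₂ hγ hs.tau_pos hτT (Ufun_pos hγ hδ hs.tau_pos) hh

theorem div_Ufun_le (hs : IsLimitingSolution a₁ a₂ b₁ b₂ c₁ c₂ γ δ d τ w w' w'')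
    (ha₁ : 0 < a₁) (hb₁ : 0 < b₁) (hb₂ : 0 < b₂) (hc₁ : 0 < c₁) (hc₂ : 0 < c₂) (hγ : 0 < γ)
    (hδ : 0 < δ) (hd : 0 < d) (hτT : τ ≤ T) {M : ℝ}
    (hM : ∀ x ∈ Icc (0:ℝ) 1, Ufun γ δ (w x) τ ≤ M) :
    ∀ x ∈ Icc (0:ℝ) 1, γ * τ / Ufun γ δ (w x) τ ≤ max 1 (γ * (b₁ * M ^ 2 + c₁ * T + a₂) / c₂) := by
  obtain ⟨x₁, hx₁, hmin⟩ :=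
    isCompact_Icc.exists_isMinOn (nonempty_Icc.2 zero_le_one) hs.continuousOn
  have hw'' : 0 ≤ w'' x₁ := secondDeriv_nonneg_of_isMinOn_Icc zero_lt_one hmin hx₁
    hs.hasDerivWithinAt hs.hasDerivWithinAt' hs.continuousOn'' hs.deriv_zero hs.deriv_one
  have hh : hfun a₁ a₂ b₁ b₂ c₁ c₂ γ (Ufun γ δ (w x₁) τ) τ ≤ 0 := by
    nlinarith [hs.equation x₁ hx₁, mul_nonneg hd.le hw'']
  intro x hx
  refine le_trans ?_ <| div_le_max_one_of_hfun_nonpos ha₁ hb₁ hb₂ hc₁ hc₂ hγ hs.tau_pos hτT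
    (Ufun_pos hγ hδ hs.tau_pos) (hM x₁ hx₁) hh
  exact div_le_div_of_nonneg_left (mul_pos hγ hs.tau_pos).le (Ufun_pos hγ hδ hs.tau_pos)
    (Ufun_mono hγ hδ hs.tau_pos (hmin hx))

end IsLimitingSolution

/-- A priori bound for the one-dimensional limiting system (Theorem 3.1): there is a
constant `C*` depending only on the data such that every solution `(w, τ)` with any
diffusion coefficient `d > 0` satisfies `‖w‖_∞ ≤ C*` and
`τ ≤ min (a₁²/(4b₁c₁)) (a₂²/(4b₂c₂))`. -/
theorem stmt_4 (a₁ a₂ b₁ b₂ c₁ c₂ γ δ : ℝ)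
    (ha₁ : 0 < a₁) (ha₂ : 0 < a₂) (hb₁ : 0 < b₁) (hb₂ : 0 < b₂)
    (hc₁ : 0 < c₁) (hc₂ : 0 < c₂) (hγ : 0 < γ) (hδ : 0 < δ) :
    ∃ Cstar > 0, ∀ d : ℝ, 0 < d → ∀ (τ : ℝ) (w w' w'' : ℝ → ℝ), 0 < τ →
      (∀ x ∈ Icc (0:ℝ) 1, HasDerivWithinAt w (w' x) (Icc 0 1) x) →
      (∀ x ∈ Icc (0:ℝ) 1, HasDerivWithinAt w' (w'' x) (Icc 0 1) x) →
      ContinuousOn w'' (Icc 0 1) →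
      (∀ x ∈ Icc (0:ℝ) 1,
        d * w'' x + hfun a₁ a₂ b₁ b₂ c₁ c₂ γ (Ufun γ δ (w x) τ) τ = 0) →
      w' 0 = 0 → w' 1 = 0 →
      (∫ x in (0:ℝ)..1,
        (Ufun γ δ (w x) τ * (a₁ - b₁ * Ufun γ δ (w x) τ) - c₁ * τ)) = 0 →
      (∀ x ∈ Icc (0:ℝ) 1, |w x| ≤ Cstar) ∧
        τ ≤ min (a₁ ^ 2 / (4 * b₁ * c₁)) (a₂ ^ 2 / (4 * b₂ * c₂)) := by
  set T := min (a₁ ^ 2 / (4 * b₁ * c₁)) (a₂ ^ 2 / (4 * b₂ * c₂))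
  set M := max 1 ((a₁ + γ * b₂ * T + γ * c₂ * T ^ 2) / b₁)
  set N := max 1 (γ * (b₁ * M ^ 2 + c₁ * T + a₂) / c₂)
  refine ⟨max (δ * M) N, lt_max_of_lt_right (lt_max_of_lt_left one_pos), ?_⟩
  intro d hd τ w w' w'' hτ hw hw' hw'' heq hn0 hn1 hint
  have hs : IsLimitingSolution a₁ a₂ b₁ b₂ c₁ c₂ γ δ d τ w w' w'' :=
    ⟨hτ, hw, hw', hw'', heq, hn0, hn1, hint⟩
  have hτT : τ ≤ T := le_min (hs.tau_le_left hb₁ hc₁ hγ hδ) (hs.tau_le_right hb₂ hc₂ hγ hδ)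
  have hU := hs.Ufun_le ha₂ hb₁ hb₂ hc₁ hc₂ hγ hδ hd hτT
  have hV := hs.div_Ufun_le ha₁ hb₁ hb₂ hc₁ hc₂ hγ hδ hd hτT hU
  refine ⟨fun x hx => ?_, hτT⟩
  have hu := Ufun_pos (w := w x) hγ hδ hτ
  rw [← Ufun_spec (w := w x) hγ hδ hτ, abs_le]
  constructor
  · calc -max (δ * M) N ≤ -(γ * τ / Ufun γ δ (w x) τ) := by
          linarith [le_max_right (δ * M) N, hV x hx]
      _ ≤ δ * Ufun γ δ (w x) τ - γ * τ / Ufun γ δ (w x) τ := by linarith [mul_pos hδ hu]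
  · calc δ * Ufun γ δ (w x) τ - γ * τ / Ufun γ δ (w x) τ ≤ δ * Ufun γ δ (w x) τ :=
          sub_le_self _ (by positivity)
      _ ≤ δ * M := by gcongr; exact hU x hx
      _ ≤ max (δ * M) N := le_max_left _ _
end

section
/- There exists τ̂ > 0 such that for every τ ∈ (0, τ̂) there exist real numbers 0 < z₁ < z₂ < z₃ with the property that h(u, τ) > 0 for all u ∈ (0, z₁) ∪ (z₂, z₃) and h(u, τ) < 0 for all u ∈ (z₁, z₂) ∪ (z₃, ∞); in particular h(z₁, τ) = h(z₂, τ) = h(z₃, τ) = 0 and z₁, z₂, z₃ are the only zeros of h(·, τ) on (0, ∞). -/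
/-!
On `u > 0`, `h(·, τ)` has the sign of the quartic `P_τ(u) = u² h(u, τ)` (`hnum`), that is
`P_τ(u) = γc₂τ² − γa₂τu + (γb₂ − c₁)τu² + a₁u³ − b₁u⁴`.
As `τ → 0`, `P_τ` tends to `u³(a₁ − b₁u)`, while `P_τ(0) = γc₂τ² > 0` and
`P_τ(qτ) = −γc₂τ² + O(τ³)` for `q = 2c₂/a₂`. So for small `τ` the quartic changes sign on
`(0, qτ)`, `(qτ, a₁/2b₁)` and `(a₁/2b₁, 2a₁/b₁)`, giving three positive roots. Dividing them
out leaves a linear factor with negative slope, which is negative on `[0, ∞)` because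
`P_τ(0) > 0`; this gives the sign pattern and rules out further positive zeros.
-/

open Set Filter Topology

lemma quadratic_eq_zero_of_three_roots {A B C z₁ z₂ z₃ : ℝ}
    (h₁₂ : z₁ ≠ z₂) (h₁₃ : z₁ ≠ z₃) (h₂₃ : z₂ ≠ z₃)
    (e₁ : A * z₁ ^ 2 + B * z₁ + C = 0) (e₂ : A * z₂ ^ 2 + B * z₂ + C = 0)
    (e₃ : A * z₃ ^ 2 + B * z₃ + C = 0) : A = 0 ∧ B = 0 ∧ C = 0 := by
  have hA : A * ((z₂ - z₁) * (z₃ - z₂) * (z₃ - z₁)) = 0 := by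
    linear_combination (z₃ - z₂) * e₁ + (z₁ - z₃) * e₂ + (z₂ - z₁) * e₃
  obtain rfl : A = 0 := (mul_eq_zero.1 hA).resolve_right <| mul_ne_zero
    (mul_ne_zero (sub_ne_zero.2 h₁₂.symm) (sub_ne_zero.2 h₂₃.symm)) (sub_ne_zero.2 h₁₃.symm)
  have hB : B * (z₂ - z₁) = 0 := by linear_combination e₂ - e₁
  obtain rfl : B = 0 := (mul_eq_zero.1 hB).resolve_right (sub_ne_zero.2 h₁₂.symm)
  exact ⟨rfl, rfl, by linear_combination e₁⟩

lemma quartic_eq_mul_of_three_roots {f : ℝ → ℝ} {a b c d e z₁ z₂ z₃ : ℝ}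
    (hf : ∀ u, f u = a * u ^ 4 + b * u ^ 3 + c * u ^ 2 + d * u + e)
    (h₁₂ : z₁ ≠ z₂) (h₁₃ : z₁ ≠ z₃) (h₂₃ : z₂ ≠ z₃)
    (hz₁ : f z₁ = 0) (hz₂ : f z₂ = 0) (hz₃ : f z₃ = 0) (u : ℝ) :
    f u = (u - z₁) * (u - z₂) * (u - z₃) * (a * u + (b + a * (z₁ + z₂ + z₃))) := by
  set k := b + a * (z₁ + z₂ + z₃)
  set s₂ := z₁ * z₂ + z₁ * z₃ + z₂ * z₃
  set s₃ := z₁ * z₂ * z₃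
  rw [hf] at hz₁ hz₂ hz₃ ⊢
  -- the remainder of `f` modulo `(u - z₁)(u - z₂)(u - z₃)` is a quadratic vanishing at the `zᵢ`
  obtain ⟨hA, hB, hC⟩ := quadratic_eq_zero_of_three_roots
    (A := c - (a * s₂ - k * (z₁ + z₂ + z₃))) (B := d - (k * s₂ - a * s₃)) (C := e + k * s₃)
    h₁₂ h₁₃ h₂₃ (by linear_combination hz₁) (by linear_combination hz₂) (by linear_combination hz₃)
  linear_combination u ^ 2 * hA + u * hB + hC

lemma exists_neg_factor_of_three_pos_roots {f : ℝ → ℝ} {a b c d e z₁ z₂ z₃ : ℝ}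
    (hf : ∀ u, f u = a * u ^ 4 + b * u ^ 3 + c * u ^ 2 + d * u + e) (ha : a < 0) (hf₀ : 0 < f 0)
    (hz₁ : 0 < z₁) (h₁₂ : z₁ < z₂) (h₂₃ : z₂ < z₃)
    (hfz₁ : f z₁ = 0) (hfz₂ : f z₂ = 0) (hfz₃ : f z₃ = 0) :
    ∃ ℓ : ℝ → ℝ, (∀ u, 0 ≤ u → ℓ u < 0) ∧ ∀ u, f u = (u - z₁) * (u - z₂) * (u - z₃) * ℓ u := by
  have hfac := quartic_eq_mul_of_three_roots hf h₁₂.ne (h₁₂.trans h₂₃).ne h₂₃.ne hfz₁ hfz₂ hfz₃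
  set k := b + a * (z₁ + z₂ + z₃)
  have hk : k < 0 := by
    have h₀ : f 0 = -(z₁ * z₂ * z₃) * k := by rw [hfac 0]; ring
    nlinarith [mul_pos (mul_pos hz₁ (hz₁.trans h₁₂)) (hz₁.trans (h₁₂.trans h₂₃))]
  exact ⟨fun u => a * u + k, fun u hu => by nlinarith, hfac⟩

lemma exists_three_roots_of_sign_changes {f : ℝ → ℝ} {p₀ p₁ p₂ p₃ : ℝ}
    (hf : ContinuousOn f (Icc p₀ p₃)) (h₀₁ : p₀ < p₁) (h₁₂ : p₁ < p₂) (h₂₃ : p₂ < p₃)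
    (hp₀ : 0 < f p₀) (hp₁ : f p₁ < 0) (hp₂ : 0 < f p₂) (hp₃ : f p₃ < 0) :
    ∃ z₁ z₂ z₃, z₁ ∈ Ioo p₀ p₁ ∧ z₂ ∈ Ioo p₁ p₂ ∧ z₃ ∈ Ioo p₂ p₃ ∧
      f z₁ = 0 ∧ f z₂ = 0 ∧ f z₃ = 0 := by
  obtain ⟨z₁, hz₁, hfz₁⟩ := intermediate_value_Ioo' h₀₁.le
    (hf.mono (Icc_subset_Icc le_rfl (h₁₂.trans h₂₃).le)) ⟨hp₁, hp₀⟩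
  obtain ⟨z₂, hz₂, hfz₂⟩ := intermediate_value_Ioo h₁₂.le
    (hf.mono (Icc_subset_Icc h₀₁.le h₂₃.le)) ⟨hp₁, hp₂⟩
  obtain ⟨z₃, hz₃, hfz₃⟩ := intermediate_value_Ioo' h₂₃.le
    (hf.mono (Icc_subset_Icc (h₀₁.trans h₁₂).le le_rfl)) ⟨hp₃, hp₂⟩
  exact ⟨z₁, z₂, z₃, hz₁, hz₂, hz₃, hfz₁, hfz₂, hfz₃⟩

lemma sign_pattern_of_eq_mul {f g : ℝ → ℝ} {z₁ z₂ z₃ : ℝ}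
    (hz₁ : 0 < z₁) (h₁₂ : z₁ < z₂) (h₂₃ : z₂ < z₃) (hg : ∀ u, 0 < u → g u < 0)
    (hf : ∀ u, 0 < u → f u = (u - z₁) * (u - z₂) * (u - z₃) * g u) :
    (∀ u ∈ Ioo 0 z₁ ∪ Ioo z₂ z₃, 0 < f u) ∧ (∀ u ∈ Ioo z₁ z₂ ∪ Ioi z₃, f u < 0) ∧
      f z₁ = 0 ∧ f z₂ = 0 ∧ f z₃ = 0 ∧ (∀ u, 0 < u → f u = 0 → u = z₁ ∨ u = z₂ ∨ u = z₃) := by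
  have hz₂ : 0 < z₂ := hz₁.trans h₁₂
  have hz₃ : 0 < z₃ := hz₂.trans h₂₃
  refine ⟨?_, ?_, by simp [hf z₁ hz₁], by simp [hf z₂ hz₂], by simp [hf z₃ hz₃], ?_⟩
  · rintro u (⟨hu, hu₁⟩ | ⟨hu₂, hu₃⟩)
    · rw [hf u hu]
      refine mul_pos_of_neg_of_neg
        (mul_neg_of_pos_of_neg (mul_pos_of_neg_of_neg ?_ ?_) ?_) (hg u hu) <;> linarith
    · have hu : 0 < u := hz₂.trans hu₂
      rw [hf u hu]
      refine mul_pos_of_neg_of_neg (mul_neg_of_pos_of_neg (mul_pos ?_ ?_) ?_) (hg u hu) <;> linarith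
  · rintro u (⟨hu₁, hu₂⟩ | hu₃)
    · have hu : 0 < u := hz₁.trans hu₁
      rw [hf u hu]
      refine mul_neg_of_pos_of_neg (mul_pos_of_neg_of_neg (mul_neg_of_pos_of_neg ?_ ?_) ?_)
        (hg u hu) <;> linarith
    · have hu : 0 < u := hz₃.trans hu₃
      rw [hf u hu]
      refine mul_neg_of_pos_of_neg (mul_pos (mul_pos ?_ ?_) ?_) (hg u hu) <;>
        linarith [mem_Ioi.1 hu₃]
  · intro u hu hfu
    rw [hf u hu, mul_eq_zero, mul_eq_zero, mul_eq_zero] at hfu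
    rcases hfu with ((h | h) | h) | h
    · exact .inl (sub_eq_zero.1 h)
    · exact .inr (.inl (sub_eq_zero.1 h))
    · exact .inr (.inr (sub_eq_zero.1 h))
    · exact absurd h (hg u hu).ne

def hnum (a₁ a₂ b₁ b₂ c₁ c₂ γ : ℝ) (u τ : ℝ) : ℝ :=
  γ * c₂ * τ ^ 2 - γ * a₂ * τ * u + (γ * b₂ - c₁) * τ * u ^ 2 + a₁ * u ^ 3 - b₁ * u ^ 4

section Numerator

variable {a₁ a₂ b₁ b₂ c₁ c₂ γ : ℝ}

lemma hfun_eq_hnum_div {u : ℝ} (hu : u ≠ 0) (τ : ℝ) :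
    hfun a₁ a₂ b₁ b₂ c₁ c₂ γ u τ = hnum a₁ a₂ b₁ b₂ c₁ c₂ γ u τ / u ^ 2 := by
  unfold hfun hnum
  field_simp
  ring

lemma hnum_eq_quartic (τ u : ℝ) :
    hnum a₁ a₂ b₁ b₂ c₁ c₂ γ u τ =
      -b₁ * u ^ 4 + a₁ * u ^ 3 + (γ * b₂ - c₁) * τ * u ^ 2 + -(γ * a₂ * τ) * u +
        γ * c₂ * τ ^ 2 := by
  unfold hnum
  ring

lemma hnum_zero_left (τ : ℝ) : hnum a₁ a₂ b₁ b₂ c₁ c₂ γ 0 τ = γ * c₂ * τ ^ 2 := by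
  simp [hnum]

lemma hnum_zero_right (u : ℝ) : hnum a₁ a₂ b₁ b₂ c₁ c₂ γ u 0 = u ^ 3 * (a₁ - b₁ * u) := by
  simp only [hnum]
  ring

lemma continuous_hnum_left (τ : ℝ) : Continuous fun u => hnum a₁ a₂ b₁ b₂ c₁ c₂ γ u τ := by
  unfold hnum
  fun_prop

lemma continuous_hnum_right (u : ℝ) : Continuous fun τ => hnum a₁ a₂ b₁ b₂ c₁ c₂ γ u τ := by
  unfold hnum
  fun_prop

lemma eventually_sign_changes_hnum (ha₁ : 0 < a₁) (ha₂ : 0 < a₂) (hb₁ : 0 < b₁) (hc₂ : 0 < c₂)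
    (hγ : 0 < γ) :
    ∀ᶠ τ in 𝓝[>] 0, ∃ p₁ p₂ p₃, 0 < p₁ ∧ p₁ < p₂ ∧ p₂ < p₃ ∧
      hnum a₁ a₂ b₁ b₂ c₁ c₂ γ p₁ τ < 0 ∧ 0 < hnum a₁ a₂ b₁ b₂ c₁ c₂ γ p₂ τ ∧
      hnum a₁ a₂ b₁ b₂ c₁ c₂ γ p₃ τ < 0 := by
  set q := 2 * c₂ / a₂
  have hq : 0 < q := by positivity
  -- the choice of `q` makes the `τ²` terms of `hnum (q τ) τ` add up to `-γ c₂ τ²`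
  obtain ⟨r, hr, hr₀, hnum_q⟩ : ∃ r : ℝ → ℝ, Continuous r ∧ r 0 = -(γ * c₂) ∧
      ∀ τ, hnum a₁ a₂ b₁ b₂ c₁ c₂ γ (q * τ) τ = τ ^ 2 * r τ :=
    ⟨fun τ => -(γ * c₂) + τ * ((γ * b₂ - c₁) * q ^ 2 + a₁ * q ^ 3 - b₁ * q ^ 4 * τ),
      by fun_prop, by simp, fun τ => by simp only [hnum, q]; field_simp; ring⟩
  have h₁ : ∀ᶠ τ in 𝓝 0, r τ < 0 :=
    (hr.tendsto 0).eventually_lt_const (by rw [hr₀]; exact neg_neg_of_pos (by positivity))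
  have h₂ : ∀ᶠ τ in 𝓝 0, q * τ < a₁ / (2 * b₁) :=
    ((continuous_const_mul q).tendsto 0).eventually_lt_const (by rw [mul_zero]; positivity)
  have h₃ : ∀ᶠ τ in 𝓝 0, 0 < hnum a₁ a₂ b₁ b₂ c₁ c₂ γ (a₁ / (2 * b₁)) τ :=
    ((continuous_hnum_right _).tendsto 0).eventually_const_lt
      (by rw [hnum_zero_right]; field_simp; ring_nf; positivity)
  have h₄ : ∀ᶠ τ in 𝓝 0, hnum a₁ a₂ b₁ b₂ c₁ c₂ γ (2 * a₁ / b₁) τ < 0 :=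
    ((continuous_hnum_right _).tendsto 0).eventually_lt_const
      (by rw [hnum_zero_right]; field_simp; ring_nf; nlinarith [pow_pos ha₁ 4])
  filter_upwards [self_mem_nhdsWithin,
    eventually_nhdsWithin_of_eventually_nhds (h₁.and (h₂.and (h₃.and h₄)))]
    with τ (hτ : 0 < τ) ⟨hτ₁, hτ₂, hτ₃, hτ₄⟩
  refine ⟨q * τ, a₁ / (2 * b₁), 2 * a₁ / b₁, by positivity, hτ₂, ?_, ?_, hτ₃, hτ₄⟩
  · rw [div_lt_div_iff₀ (by positivity) hb₁]
    nlinarith [mul_pos ha₁ hb₁]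
  · rw [hnum_q]
    exact mul_neg_of_pos_of_neg (by positivity) hτ₁

end Numerator

theorem stmt_8_general (a₁ a₂ b₁ b₂ c₁ c₂ γ : ℝ)
    (ha₁ : 0 < a₁) (ha₂ : 0 < a₂) (hb₁ : 0 < b₁)
    (hc₂ : 0 < c₂) (hγ : 0 < γ) :
    ∃ τhat > 0, ∀ τ : ℝ, τ ∈ Ioo 0 τhat →
      ∃ z₁ z₂ z₃ : ℝ, 0 < z₁ ∧ z₁ < z₂ ∧ z₂ < z₃ ∧
        (∀ u : ℝ, u ∈ Ioo 0 z₁ ∪ Ioo z₂ z₃ → 0 < hfun a₁ a₂ b₁ b₂ c₁ c₂ γ u τ) ∧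
        (∀ u : ℝ, u ∈ Ioo z₁ z₂ ∪ Ioi z₃ → hfun a₁ a₂ b₁ b₂ c₁ c₂ γ u τ < 0) ∧
        hfun a₁ a₂ b₁ b₂ c₁ c₂ γ z₁ τ = 0 ∧
        hfun a₁ a₂ b₁ b₂ c₁ c₂ γ z₂ τ = 0 ∧
        hfun a₁ a₂ b₁ b₂ c₁ c₂ γ z₃ τ = 0 ∧
        (∀ u : ℝ, 0 < u → hfun a₁ a₂ b₁ b₂ c₁ c₂ γ u τ = 0 →
          u = z₁ ∨ u = z₂ ∨ u = z₃) := by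
  obtain ⟨τhat, hτhat, hsub⟩ :=
    mem_nhdsGT_iff_exists_Ioo_subset.1 (eventually_sign_changes_hnum ha₁ ha₂ hb₁ hc₂ hγ)
  refine ⟨τhat, hτhat, fun τ hτ => ?_⟩
  obtain ⟨p₁, p₂, p₃, hp₁, h₁₂, h₂₃, hP₁, hP₂, hP₃⟩ := hsub hτ
  have hP₀ : 0 < hnum a₁ a₂ b₁ b₂ c₁ c₂ γ 0 τ := by
    rw [hnum_zero_left]
    exact mul_pos (mul_pos hγ hc₂) (pow_pos hτ.1 2)
  obtain ⟨z₁, z₂, z₃, ⟨hz₁, hz₁p₁⟩, ⟨hz₂p₁, hz₂p₂⟩, ⟨hz₃p₂, -⟩, hr₁, hr₂, hr₃⟩ :=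
    exists_three_roots_of_sign_changes (continuous_hnum_left τ).continuousOn
      hp₁ h₁₂ h₂₃ hP₀ hP₁ hP₂ hP₃
  have hz₁₂ : z₁ < z₂ := hz₁p₁.trans hz₂p₁
  have hz₂₃ : z₂ < z₃ := hz₂p₂.trans hz₃p₂
  obtain ⟨ℓ, hℓ, hfac⟩ := exists_neg_factor_of_three_pos_roots (hnum_eq_quartic τ)
    (neg_lt_zero.2 hb₁) hP₀ hz₁ hz₁₂ hz₂₃ hr₁ hr₂ hr₃
  refine ⟨z₁, z₂, z₃, hz₁, hz₁₂, hz₂₃, sign_pattern_of_eq_mul (g := fun u => ℓ u / u ^ 2)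
    hz₁ hz₁₂ hz₂₃ (fun u hu => div_neg_of_neg_of_pos (hℓ u hu.le) (by positivity)) fun u hu => ?_⟩
  rw [hfun_eq_hnum_div hu.ne', hfac]
  ring

/-- Existence part of Lemma 6.1: for all sufficiently small `τ > 0`, the function
`h(·, τ)` has exactly three positive zeros `z₁ < z₂ < z₃`, is positive on
`(0,z₁) ∪ (z₂,z₃)` and negative on `(z₁,z₂) ∪ (z₃,∞)`. -/
theorem stmt_8 (a₁ a₂ b₁ b₂ c₁ c₂ γ δ : ℝ)
    (ha₁ : 0 < a₁) (ha₂ : 0 < a₂) (hb₁ : 0 < b₁) (hb₂ : 0 < b₂)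
    (hc₁ : 0 < c₁) (hc₂ : 0 < c₂) (hγ : 0 < γ) (hδ : 0 < δ) :
    ∃ τhat > 0, ∀ τ : ℝ, τ ∈ Ioo 0 τhat →
      ∃ z₁ z₂ z₃ : ℝ, 0 < z₁ ∧ z₁ < z₂ ∧ z₂ < z₃ ∧
        (∀ u : ℝ, u ∈ Ioo 0 z₁ ∪ Ioo z₂ z₃ → 0 < hfun a₁ a₂ b₁ b₂ c₁ c₂ γ u τ) ∧
        (∀ u : ℝ, u ∈ Ioo z₁ z₂ ∪ Ioi z₃ → hfun a₁ a₂ b₁ b₂ c₁ c₂ γ u τ < 0) ∧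
        hfun a₁ a₂ b₁ b₂ c₁ c₂ γ z₁ τ = 0 ∧
        hfun a₁ a₂ b₁ b₂ c₁ c₂ γ z₂ τ = 0 ∧
        hfun a₁ a₂ b₁ b₂ c₁ c₂ γ z₃ τ = 0 ∧
        (∀ u : ℝ, 0 < u → hfun a₁ a₂ b₁ b₂ c₁ c₂ γ u τ = 0 →
          u = z₁ ∨ u = z₂ ∨ u = z₃) :=
  stmt_8_general a₁ a₂ b₁ b₂ c₁ c₂ γ ha₁ ha₂ hb₁ hc₂ hγ
end

section
/- Let τ̂ > 0 and let z₁, z₂, z₃ : (0, τ̂) → ℝ be functions such that for every τ ∈ (0, τ̂): 0 < z₁(τ) < z₂(τ) < z₃(τ), h(u, τ) > 0 for all u ∈ (0, z₁(τ)) ∪ (z₂(τ), z₃(τ)), and h(u, τ) < 0 for all u ∈ (z₁(τ), z₂(τ)) ∪ (z₃(τ), ∞). Then lim_{τ → 0⁺} z₁(τ)/τ = c₂/a₂, lim_{τ → 0⁺} z₂(τ)/√τ = √(γ·a₂/a₁), and lim_{τ → 0⁺} z₃(τ) = a₁/b₁. -/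
open Set Filter Topology

def SignPattern (f : ℝ → ℝ) (x₁ x₂ x₃ : ℝ) : Prop :=
  (∀ u ∈ Ioo 0 x₁ ∪ Ioo x₂ x₃, 0 < f u) ∧ (∀ u ∈ Ioo x₁ x₂ ∪ Ioi x₃, f u < 0)

namespace SignPattern

variable {f : ℝ → ℝ} {x₁ x₂ x₃ u : ℝ}

lemma le_right_of_pos (h : SignPattern f x₁ x₂ x₃) (hu : 0 < f u) : u ≤ x₃ :=
  not_lt.1 fun hlt => (h.2 u (Or.inr hlt)).not_gt hu

lemma left_le_of_neg (h : SignPattern f x₁ x₂ x₃) (hu₀ : 0 < u) (hu : f u < 0) : x₁ ≤ u :=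
  not_lt.1 fun hlt => (h.1 u (Or.inl ⟨hu₀, hlt⟩)).not_gt hu

lemma le_left_of_pos (h : SignPattern f x₁ x₂ x₃) (hu : 0 < f u) (hu₂ : u < x₂) : u ≤ x₁ :=
  not_lt.1 fun hlt => (h.2 u (Or.inl ⟨hlt, hu₂⟩)).not_gt hu

lemma mid_le_of_pos (h : SignPattern f x₁ x₂ x₃) (hu : 0 < f u) (hu₁ : x₁ < u) : x₂ ≤ u :=
  not_lt.1 fun hlt => (h.2 u (Or.inl ⟨hu₁, hlt⟩)).not_gt hu

lemma le_mid_of_neg (h : SignPattern f x₁ x₂ x₃) (hu : f u < 0) (hu₃ : u < x₃) : u ≤ x₂ :=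
  not_lt.1 fun hlt => (h.1 u (Or.inr ⟨hlt, hu₃⟩)).not_gt hu

lemma right_le_of_neg (h : SignPattern f x₁ x₂ x₃) (hu : f u < 0) (hu₂ : x₂ < u) : x₃ ≤ u :=
  not_lt.1 fun hlt => (h.1 u (Or.inr ⟨hu₂, hlt⟩)).not_gt hu

end SignPattern

lemma tendsto_of_eventually_bounds {α : Type*} {l : Filter α} {f : α → ℝ} {L : ℝ} (hL : 0 < L)
    (hlow : ∀ a, 0 < a → a < L → ∀ᶠ x in l, a ≤ f x)
    (hup : ∀ b, L < b → ∀ᶠ x in l, f x ≤ b) :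
    Tendsto f l (𝓝 L) := by
  refine tendsto_order.2 ⟨fun a ha => ?_, fun b hb => ?_⟩
  · obtain ⟨c, hac, hcL⟩ := exists_between (max_lt ha hL)
    exact (hlow c ((le_max_right a 0).trans_lt hac) hcL).mono fun x hx =>
      ((le_max_left a 0).trans_lt hac).trans_le hx
  · obtain ⟨c, hLc, hcb⟩ := exists_between hb
    exact (hup c hLc).mono fun x hx => hx.trans_lt hcb

lemma tendsto_div_of_eventually_bounds {α : Type*} {l : Filter α} {f φ : α → ℝ} {L : ℝ}
    (hL : 0 < L) (hφ : ∀ᶠ x in l, 0 < φ x)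
    (hlow : ∀ a, 0 < a → a < L → ∀ᶠ x in l, a * φ x ≤ f x)
    (hup : ∀ b, L < b → ∀ᶠ x in l, f x ≤ b * φ x) :
    Tendsto (fun x => f x / φ x) l (𝓝 L) :=
  tendsto_of_eventually_bounds hL
    (fun a ha haL => ((hlow a ha haL).and hφ).mono fun _ hx => (le_div_iff₀ hx.2).2 hx.1)
    (fun b hb => ((hup b hb).and hφ).mono fun _ hx => (div_le_iff₀ hx.2).2 hx.1)

lemma eventually_mul_sqrt_lt (C : ℝ) {c : ℝ} (hc : 0 < c) :
    ∀ᶠ τ in 𝓝[>] (0 : ℝ), C * √τ < c := by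
  have h : Tendsto (fun τ => C * √τ) (𝓝[>] (0 : ℝ)) (𝓝 (C * √0)) :=
    ((continuous_const.mul Real.continuous_sqrt).tendsto 0).mono_left nhdsWithin_le_nhds
  rw [Real.sqrt_zero, mul_zero] at h
  exact h.eventually_lt_const hc

lemma eventually_mul_lt_mul_sqrt (C : ℝ) {c : ℝ} (hc : 0 < c) :
    ∀ᶠ τ in 𝓝[>] (0 : ℝ), C * τ < c * √τ := by
  filter_upwards [eventually_mul_sqrt_lt C hc, self_mem_nhdsWithin] with τ h (hτ : 0 < τ)
  calc C * τ = C * √τ * √τ := by rw [mul_assoc, Real.mul_self_sqrt hτ.le]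
    _ < c * √τ := mul_lt_mul_of_pos_right h (Real.sqrt_pos.2 hτ)

section Asymptotics

variable (a₁ a₂ b₁ b₂ c₁ c₂ γ : ℝ)

lemma tendsto_hfun_const (u : ℝ) :
    Tendsto (hfun a₁ a₂ b₁ b₂ c₁ c₂ γ u) (𝓝[>] 0) (𝓝 (u * (a₁ - b₁ * u))) := by
  have hc : Continuous (hfun a₁ a₂ b₁ b₂ c₁ c₂ γ u) := by unfold hfun; fun_prop
  simpa [hfun] using (hc.tendsto 0).mono_left nhdsWithin_le_nhds

lemma tendsto_hfun_mul {K : ℝ} (hK : K ≠ 0) :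
    Tendsto (fun τ => hfun a₁ a₂ b₁ b₂ c₁ c₂ γ (K * τ) τ) (𝓝[>] 0)
      (𝓝 (-(γ / K) * (a₂ - c₂ / K))) := by
  set F : ℝ → ℝ := fun τ => K * τ * (a₁ - b₁ * (K * τ)) - c₁ * τ -
    γ / K * (a₂ - b₂ * (K * τ) - c₂ / K)
  have hF : Tendsto F (𝓝[>] 0) (𝓝 (F 0)) :=
    ((by fun_prop : Continuous F).tendsto 0).mono_left nhdsWithin_le_nhds
  refine (by simpa [F] using hF : Tendsto F _ _).congr' ?_
  filter_upwards [self_mem_nhdsWithin] with τ (hτ : 0 < τ)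
  simp only [F, hfun]
  field_simp

lemma tendsto_hfun_mul_sqrt_div {s : ℝ} (hs : s ≠ 0) :
    Tendsto (fun τ => hfun a₁ a₂ b₁ b₂ c₁ c₂ γ (s * √τ) τ / √τ) (𝓝[>] 0)
      (𝓝 (s * a₁ - γ * a₂ / s)) := by
  set F : ℝ → ℝ := fun t => s * (a₁ - b₁ * (s * t)) - c₁ * t -
    γ / s * (a₂ - b₂ * (s * t) - c₂ * t / s)
  have hF : Tendsto (fun τ => F √τ) (𝓝[>] 0) (𝓝 (F √0)) :=
    (((by fun_prop : Continuous F).comp Real.continuous_sqrt).tendsto 0).mono_left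
      nhdsWithin_le_nhds
  have hF0 : F √0 = s * a₁ - γ * a₂ / s := by simp only [F, Real.sqrt_zero]; ring
  rw [hF0] at hF
  refine hF.congr' ?_
  filter_upwards [self_mem_nhdsWithin] with τ (hτ : 0 < τ)
  obtain ⟨t, ht, rfl⟩ : ∃ t, 0 < t ∧ t * t = τ := ⟨√τ, Real.sqrt_pos.2 hτ, Real.mul_self_sqrt hτ.le⟩
  simp only [F, hfun, Real.sqrt_mul_self ht.le]
  field_simp

end Asymptotics

section Bounds

variable {a₁ a₂ b₁ b₂ c₁ c₂ γ : ℝ} {z₁ z₂ z₃ : ℝ → ℝ}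

lemma eventually_le_z₃ (hb₁ : 0 < b₁)
    (hz : ∀ᶠ τ in 𝓝[>] (0 : ℝ), SignPattern (hfun a₁ a₂ b₁ b₂ c₁ c₂ γ · τ) (z₁ τ) (z₂ τ) (z₃ τ))
    {u : ℝ} (hu₀ : 0 < u) (hu : u < a₁ / b₁) :
    ∀ᶠ τ in 𝓝[>] (0 : ℝ), u ≤ z₃ τ := by
  have hpos : 0 < u * (a₁ - b₁ * u) :=
    mul_pos hu₀ (sub_pos.2 (by rwa [lt_div_iff₀' hb₁] at hu))
  filter_upwards [hz, (tendsto_hfun_const a₁ a₂ b₁ b₂ c₁ c₂ γ u).eventually_const_lt hpos]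
    with τ hτ hh using hτ.le_right_of_pos hh

lemma eventually_z₁_le (ha₂ : 0 < a₂) (hc₂ : 0 < c₂) (hγ : 0 < γ)
    (hz : ∀ᶠ τ in 𝓝[>] (0 : ℝ), SignPattern (hfun a₁ a₂ b₁ b₂ c₁ c₂ γ · τ) (z₁ τ) (z₂ τ) (z₃ τ))
    {K : ℝ} (hK : c₂ / a₂ < K) :
    ∀ᶠ τ in 𝓝[>] (0 : ℝ), z₁ τ ≤ K * τ := by
  have hK₀ : 0 < K := (div_pos hc₂ ha₂).trans hK
  have hneg : -(γ / K) * (a₂ - c₂ / K) < 0 := by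
    rw [div_lt_iff₀ ha₂] at hK
    exact mul_neg_of_neg_of_pos (neg_neg_of_pos (div_pos hγ hK₀))
      (sub_pos.2 (by rwa [div_lt_iff₀ hK₀, mul_comm]))
  filter_upwards [hz, (tendsto_hfun_mul a₁ a₂ b₁ b₂ c₁ c₂ γ hK₀.ne').eventually_lt_const hneg,
    self_mem_nhdsWithin] with τ hτ hh (hτ₀ : 0 < τ) using hτ.left_le_of_neg (by positivity) hh

lemma eventually_le_z₂ (ha₁ : 0 < a₁) (hb₁ : 0 < b₁)
    (hz : ∀ᶠ τ in 𝓝[>] (0 : ℝ), SignPattern (hfun a₁ a₂ b₁ b₂ c₁ c₂ γ · τ) (z₁ τ) (z₂ τ) (z₃ τ))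
    {s : ℝ} (hs₀ : 0 < s) (hs : s < √(γ * a₂ / a₁)) :
    ∀ᶠ τ in 𝓝[>] (0 : ℝ), s * √τ ≤ z₂ τ := by
  have hneg : s * a₁ - γ * a₂ / s < 0 := by
    rw [Real.lt_sqrt hs₀.le, lt_div_iff₀ ha₁] at hs
    rw [sub_neg, lt_div_iff₀ hs₀]
    linarith
  have hA : 0 < a₁ / b₁ := div_pos ha₁ hb₁
  filter_upwards [hz,
    (tendsto_hfun_mul_sqrt_div a₁ a₂ b₁ b₂ c₁ c₂ γ hs₀.ne').eventually_lt_const hneg,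
    eventually_le_z₃ hb₁ hz (half_pos hA) (half_lt_self hA),
    eventually_mul_sqrt_lt s (half_pos hA), self_mem_nhdsWithin]
    with τ hτ hh h₃ hlt (hτ₀ : 0 < τ)
  rw [div_lt_iff₀ (Real.sqrt_pos.2 hτ₀), zero_mul] at hh
  exact hτ.le_mid_of_neg hh (hlt.trans_le h₃)

lemma eventually_z₂_le (ha₁ : 0 < a₁) (ha₂ : 0 < a₂) (hc₂ : 0 < c₂) (hγ : 0 < γ)
    (hz : ∀ᶠ τ in 𝓝[>] (0 : ℝ), SignPattern (hfun a₁ a₂ b₁ b₂ c₁ c₂ γ · τ) (z₁ τ) (z₂ τ) (z₃ τ))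
    {s : ℝ} (hs : √(γ * a₂ / a₁) < s) :
    ∀ᶠ τ in 𝓝[>] (0 : ℝ), z₂ τ ≤ s * √τ := by
  have hs₀ : 0 < s := (Real.sqrt_nonneg _).trans_lt hs
  have hpos : 0 < s * a₁ - γ * a₂ / s := by
    rw [Real.sqrt_lt' hs₀, div_lt_iff₀ ha₁] at hs
    rw [sub_pos, div_lt_iff₀ hs₀]
    linarith
  filter_upwards [hz,
    (tendsto_hfun_mul_sqrt_div a₁ a₂ b₁ b₂ c₁ c₂ γ hs₀.ne').eventually_const_lt hpos,
    eventually_z₁_le ha₂ hc₂ hγ hz (lt_add_one (c₂ / a₂)),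
    eventually_mul_lt_mul_sqrt (c₂ / a₂ + 1) hs₀, self_mem_nhdsWithin]
    with τ hτ hh h₁ hlt (hτ₀ : 0 < τ)
  rw [div_pos_iff_of_pos_right (Real.sqrt_pos.2 hτ₀)] at hh
  exact hτ.mid_le_of_pos hh (h₁.trans_lt hlt)

lemma eventually_le_z₁ (ha₁ : 0 < a₁) (ha₂ : 0 < a₂) (hb₁ : 0 < b₁) (hγ : 0 < γ)
    (hz : ∀ᶠ τ in 𝓝[>] (0 : ℝ), SignPattern (hfun a₁ a₂ b₁ b₂ c₁ c₂ γ · τ) (z₁ τ) (z₂ τ) (z₃ τ))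
    {K : ℝ} (hK₀ : 0 < K) (hK : K < c₂ / a₂) :
    ∀ᶠ τ in 𝓝[>] (0 : ℝ), K * τ ≤ z₁ τ := by
  have hpos : 0 < -(γ / K) * (a₂ - c₂ / K) := by
    rw [lt_div_iff₀ ha₂] at hK
    exact mul_pos_of_neg_of_neg (neg_neg_of_pos (div_pos hγ hK₀))
      (sub_neg.2 (by rwa [lt_div_iff₀ hK₀, mul_comm]))
  have hS : 0 < √(γ * a₂ / a₁) := Real.sqrt_pos.2 (by positivity)
  filter_upwards [hz, (tendsto_hfun_mul a₁ a₂ b₁ b₂ c₁ c₂ γ hK₀.ne').eventually_const_lt hpos,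
    eventually_le_z₂ ha₁ hb₁ hz (half_pos hS) (half_lt_self hS),
    eventually_mul_lt_mul_sqrt K (half_pos hS)] with τ hτ hh h₂ hlt
  exact hτ.le_left_of_pos hh (hlt.trans_le h₂)

lemma eventually_z₃_le (ha₁ : 0 < a₁) (ha₂ : 0 < a₂) (hb₁ : 0 < b₁) (hc₂ : 0 < c₂) (hγ : 0 < γ)
    (hz : ∀ᶠ τ in 𝓝[>] (0 : ℝ), SignPattern (hfun a₁ a₂ b₁ b₂ c₁ c₂ γ · τ) (z₁ τ) (z₂ τ) (z₃ τ))
    {u : ℝ} (hu : a₁ / b₁ < u) :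
    ∀ᶠ τ in 𝓝[>] (0 : ℝ), z₃ τ ≤ u := by
  have hu₀ : 0 < u := (div_pos ha₁ hb₁).trans hu
  have hneg : u * (a₁ - b₁ * u) < 0 :=
    mul_neg_of_pos_of_neg hu₀ (sub_neg.2 (by rwa [div_lt_iff₀' hb₁] at hu))
  have hS : 0 < √(γ * a₂ / a₁) := Real.sqrt_pos.2 (by positivity)
  filter_upwards [hz, (tendsto_hfun_const a₁ a₂ b₁ b₂ c₁ c₂ γ u).eventually_lt_const hneg,
    eventually_z₂_le ha₁ ha₂ hc₂ hγ hz (lt_two_mul_self hS),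
    eventually_mul_sqrt_lt (2 * √(γ * a₂ / a₁)) hu₀] with τ hτ hh h₂ hlt
  exact hτ.right_le_of_neg hh (h₂.trans_lt hlt)

end Bounds

theorem stmt_9_general (a₁ a₂ b₁ b₂ c₁ c₂ γ : ℝ)
    (ha₁ : 0 < a₁) (ha₂ : 0 < a₂) (hb₁ : 0 < b₁)
    (hc₂ : 0 < c₂) (hγ : 0 < γ)
    (τhat : ℝ) (hτhat : 0 < τhat)
    (z₁ z₂ z₃ : ℝ → ℝ)
    (hz : ∀ τ ∈ Ioo (0:ℝ) τhat,
      0 < z₁ τ ∧ z₁ τ < z₂ τ ∧ z₂ τ < z₃ τ ∧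
      (∀ u : ℝ, u ∈ Ioo 0 (z₁ τ) ∪ Ioo (z₂ τ) (z₃ τ) →
        0 < hfun a₁ a₂ b₁ b₂ c₁ c₂ γ u τ) ∧
      (∀ u : ℝ, u ∈ Ioo (z₁ τ) (z₂ τ) ∪ Ioi (z₃ τ) →
        hfun a₁ a₂ b₁ b₂ c₁ c₂ γ u τ < 0)) :
    Tendsto (fun τ => z₁ τ / τ) (𝓝[>] 0) (𝓝 (c₂ / a₂)) ∧
    Tendsto (fun τ => z₂ τ / Real.sqrt τ) (𝓝[>] 0)
      (𝓝 (Real.sqrt (γ * a₂ / a₁))) ∧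
    Tendsto z₃ (𝓝[>] 0) (𝓝 (a₁ / b₁)) := by
  have hpat : ∀ᶠ τ in 𝓝[>] (0 : ℝ),
      SignPattern (hfun a₁ a₂ b₁ b₂ c₁ c₂ γ · τ) (z₁ τ) (z₂ τ) (z₃ τ) := by
    filter_upwards [Ioo_mem_nhdsGT hτhat] with τ hτ using (hz τ hτ).2.2.2
  have hτ₀ : ∀ᶠ τ in 𝓝[>] (0 : ℝ), 0 < τ := self_mem_nhdsWithin
  refine ⟨?_, ?_, ?_⟩
  · exact tendsto_div_of_eventually_bounds (div_pos hc₂ ha₂) hτ₀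
      (fun _ hK₀ hK => eventually_le_z₁ ha₁ ha₂ hb₁ hγ hpat hK₀ hK)
      (fun _ hK => eventually_z₁_le ha₂ hc₂ hγ hpat hK)
  · exact tendsto_div_of_eventually_bounds (Real.sqrt_pos.2 (by positivity))
      (hτ₀.mono fun _ => Real.sqrt_pos.2)
      (fun _ hs₀ hs => eventually_le_z₂ ha₁ hb₁ hpat hs₀ hs)
      (fun _ hs => eventually_z₂_le ha₁ ha₂ hc₂ hγ hpat hs)
  · exact tendsto_of_eventually_bounds (div_pos ha₁ hb₁)
      (fun _ hu₀ hu => eventually_le_z₃ hb₁ hpat hu₀ hu)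
      (fun _ hu => eventually_z₃_le ha₁ ha₂ hb₁ hc₂ hγ hpat hu)

/-- Asymptotic part of Lemma 6.1: for the three zeros `z₁(τ) < z₂(τ) < z₃(τ)` of
`h(·, τ)`, one has `z₁(τ)/τ → c₂/a₂`, `z₂(τ)/√τ → √(γa₂/a₁)` and `z₃(τ) → a₁/b₁`
as `τ → 0⁺`. -/
theorem stmt_9 (a₁ a₂ b₁ b₂ c₁ c₂ γ δ : ℝ)
    (ha₁ : 0 < a₁) (ha₂ : 0 < a₂) (hb₁ : 0 < b₁) (hb₂ : 0 < b₂)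
    (hc₁ : 0 < c₁) (hc₂ : 0 < c₂) (hγ : 0 < γ) (hδ : 0 < δ)
    (τhat : ℝ) (hτhat : 0 < τhat)
    (z₁ z₂ z₃ : ℝ → ℝ)
    (hz : ∀ τ ∈ Ioo (0:ℝ) τhat,
      0 < z₁ τ ∧ z₁ τ < z₂ τ ∧ z₂ τ < z₃ τ ∧
      (∀ u : ℝ, u ∈ Ioo 0 (z₁ τ) ∪ Ioo (z₂ τ) (z₃ τ) →
        0 < hfun a₁ a₂ b₁ b₂ c₁ c₂ γ u τ) ∧
      (∀ u : ℝ, u ∈ Ioo (z₁ τ) (z₂ τ) ∪ Ioi (z₃ τ) →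
        hfun a₁ a₂ b₁ b₂ c₁ c₂ γ u τ < 0)) :
    Tendsto (fun τ => z₁ τ / τ) (𝓝[>] 0) (𝓝 (c₂ / a₂)) ∧
    Tendsto (fun τ => z₂ τ / Real.sqrt τ) (𝓝[>] 0)
      (𝓝 (Real.sqrt (γ * a₂ / a₁))) ∧
    Tendsto z₃ (𝓝[>] 0) (𝓝 (a₁ / b₁)) :=
  stmt_9_general a₁ a₂ b₁ b₂ c₁ c₂ γ ha₁ ha₂ hb₁ hc₂ hγ τhat hτhat z₁ z₂ z₃ hz
end

section
/- Let τ > 0 and suppose there exist 0 < z₁ < z₂ < z₃ such that h(u, τ) > 0 for u ∈ (0, z₁) ∪ (z₂, z₃) and h(u, τ) < 0 for u ∈ (z₁, z₂) ∪ (z₃, ∞), and suppose ∂h/∂u(z₂, τ) > 0. Define H(u) := ∫_{z₂}^{u} h(s, τ)·(δ + γτ/s²) ds. Suppose m̄ ∈ (z₁, z₂) and M : (m̄, z₂) → (z₂, z₃) satisfies H(M(m)) = H(m) for all m ∈ (m̄, z₂) and M(m) → z₂ as m → z₂⁻. Then lim_{m → z₂⁻} ∫_{m}^{M(m)} (δ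 + γτ/u²)/√(H(m) − H(u)) du = π·√( 2(δ + γτ/z₂²) / (∂h/∂u(z₂, τ)) ). -/
/-!
Since `H(z₂) = H'(z₂) = 0 < H''(z₂)`, the signed square root `G = sign(u - z₂) √H` is a
differentiable chart near `z₂` with `G' > 0` continuous at `z₂` and `G'(z₂) = √(H''(z₂)/2)`.
With `r = G(M(m)) = -G(m)` the integrand is `(w / G') · G' / √(r² - G²)`, and the second factor
is the derivative of `arcsin (G / r)`, a nonnegative kernel of total mass `π` on `[m, M(m)]`.
As this interval shrinks to `z₂`, the integral tends to `π w(z₂) / G'(z₂)`.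
-/
open Set Filter Topology

open MeasureTheory Real

section ArcsinKernel

variable {g g' : ℝ → ℝ} {p q r : ℝ}

theorem hasDerivAt_arcsin_div {u : ℝ} (hd : HasDerivAt g (g' u) u) (hgu : |g u| < r) :
    HasDerivAt (fun x => arcsin (g x / r)) (g' u / √(r ^ 2 - g u ^ 2)) u := by
  have hr : 0 < r := (abs_nonneg _).trans_lt hgu
  obtain ⟨hlo, hhi⟩ := abs_lt.1 hgu
  have hlo' : -1 < g u / r := by rw [lt_div_iff₀ hr]; linarith
  have hhi' : g u / r < 1 := by rw [div_lt_iff₀ hr]; linarith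
  refine ((hasDerivAt_arcsin hlo'.ne' hhi'.ne).comp u (hd.div_const r)).congr_deriv ?_
  have hsq : √(1 - (g u / r) ^ 2) = √(r ^ 2 - g u ^ 2) / r := by
    rw [show 1 - (g u / r) ^ 2 = (r ^ 2 - g u ^ 2) / r ^ 2 by field_simp,
      sqrt_div' _ (sq_nonneg r), sqrt_sq hr.le]
  have hpos : 0 < r ^ 2 - g u ^ 2 := sub_pos.2 (sq_lt_sq' hlo hhi)
  rw [hsq]
  field_simp

variable (hcont : ContinuousOn g (Icc p q)) (hderiv : ∀ u ∈ Ioo p q, HasDerivAt g (g' u) u)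
  (hg' : ∀ u ∈ Ioo p q, 0 < g' u) (hgp : g p = -r) (hgq : g q = r)
include hcont hderiv hg' hgp hgq

theorem abs_lt_of_hasDerivAt_pos {u : ℝ} (hu : u ∈ Ioo p q) : |g u| < r := by
  have hmono : StrictMonoOn g (Icc p q) :=
    strictMonoOn_of_hasDerivWithinAt_pos (convex_Icc p q) hcont
      (fun x hx => (hderiv x (by simpa using hx)).hasDerivWithinAt)
      (fun x hx => hg' x (by simpa using hx))
  have hlo := hmono (left_mem_Icc.2 (hu.1.trans hu.2).le) (Ioo_subset_Icc_self hu) hu.1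
  have hhi := hmono (Ioo_subset_Icc_self hu) (right_mem_Icc.2 (hu.1.trans hu.2).le) hu.2
  rw [hgp] at hlo
  rw [hgq] at hhi
  exact abs_lt.2 ⟨hlo, hhi⟩

theorem integrableOn_deriv_div_sqrt_sq_sub_sq :
    IntegrableOn (fun u => g' u / √(r ^ 2 - g u ^ 2)) (Ioc p q) :=
  intervalIntegral.integrableOn_deriv_of_nonneg
    (continuous_arcsin.comp_continuousOn (hcont.div_const r))
    (fun u hu => hasDerivAt_arcsin_div (hderiv u hu)
      (abs_lt_of_hasDerivAt_pos hcont hderiv hg' hgp hgq hu))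
    (fun u hu => div_nonneg (hg' u hu).le (sqrt_nonneg _))

theorem integral_deriv_div_sqrt_sq_sub_sq (hpq : p < q) :
    ∫ u in Ioc p q, g' u / √(r ^ 2 - g u ^ 2) = π := by
  have hr : 0 < r := by
    have := abs_lt_of_hasDerivAt_pos hcont hderiv hg' hgp hgq
      (u := (p + q) / 2) ⟨by linarith, by linarith⟩
    exact (abs_nonneg _).trans_lt this
  rw [← intervalIntegral.integral_of_le hpq.le,
    intervalIntegral.integral_eq_sub_of_hasDerivAt_of_le hpq.le
      (continuous_arcsin.comp_continuousOn (hcont.div_const r))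
      (fun u hu => hasDerivAt_arcsin_div (hderiv u hu)
        (abs_lt_of_hasDerivAt_pos hcont hderiv hg' hgp hgq hu))
      ((intervalIntegrable_iff_integrableOn_Ioc_of_le hpq.le).2
        (integrableOn_deriv_div_sqrt_sq_sub_sq hcont hderiv hg' hgp hgq))]
  simp only [Function.comp_apply, hgp, hgq, neg_div, div_self hr.ne', arcsin_one, arcsin_neg]
  ring

end ArcsinKernel

theorem tendsto_setIntegral_Ioc_mul_of_concentrating {ι : Type*} {l : Filter ι} {p q : ι → ℝ}
    {K : ι → ℝ → ℝ} {Ψ : ℝ → ℝ} {z c : ℝ}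
    (hp : Tendsto p l (𝓝 z)) (hq : Tendsto q l (𝓝 z)) (hΨ : ContinuousAt Ψ z)
    (hΨm : Measurable Ψ)
    (hK : ∀ᶠ i in l, IntegrableOn (K i) (Ioc (p i) (q i)) ∧
      (∀ u ∈ Ioc (p i) (q i), 0 ≤ K i u) ∧ ∫ u in Ioc (p i) (q i), K i u = c) :
    Tendsto (fun i => ∫ u in Ioc (p i) (q i), Ψ u * K i u) l (𝓝 (Ψ z * c)) := by
  rw [Metric.tendsto_nhds]
  intro ε hε
  set ε' := ε / (|c| + 1)
  have hε' : 0 < ε' := by positivity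
  obtain ⟨δ, hδ, hΨδ⟩ := Metric.continuousAt_iff.1 hΨ ε' hε'
  filter_upwards [hK, Metric.tendsto_nhds.1 hp δ hδ, Metric.tendsto_nhds.1 hq δ hδ]
    with i ⟨hint, hnonneg, hmass⟩ hpi hqi
  have hclose : ∀ u ∈ Ioc (p i) (q i), ‖Ψ u - Ψ z‖ ≤ ε' := by
    intro u hu
    rw [← dist_eq_norm]
    refine (hΨδ ?_).le
    rw [Real.dist_eq, abs_lt] at hpi hqi ⊢
    constructor <;> linarith [hu.1, hu.2]
  have hint' : IntegrableOn (fun u => (Ψ u - Ψ z) * K i u) (Ioc (p i) (q i)) :=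
    hint.bdd_mul (hΨm.sub_const _).aestronglyMeasurable
      (ae_restrict_of_forall_mem measurableSet_Ioc hclose)
  have hsplit : ∫ u in Ioc (p i) (q i), Ψ u * K i u
      = (∫ u in Ioc (p i) (q i), (Ψ u - Ψ z) * K i u) + Ψ z * c := by
    rw [← hmass, ← integral_const_mul, ← integral_add hint' (hint.const_mul _)]
    congr 1 with u
    ring
  rw [dist_eq_norm, hsplit, add_sub_cancel_right]
  calc ‖∫ u in Ioc (p i) (q i), (Ψ u - Ψ z) * K i u‖
      ≤ ∫ u in Ioc (p i) (q i), ε' * K i u := by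
        refine norm_integral_le_of_norm_le (hint.const_mul ε')
          (ae_restrict_of_forall_mem measurableSet_Ioc fun u hu => ?_)
        rw [norm_mul, Real.norm_of_nonneg (hnonneg u hu)]
        exact mul_le_mul_of_nonneg_right (hclose u hu) (hnonneg u hu)
    _ = ε' * c := by rw [integral_const_mul, hmass]
    _ ≤ ε' * |c| := mul_le_mul_of_nonneg_left (le_abs_self c) hε'.le
    _ < ε := by
        rw [div_mul_eq_mul_div, div_lt_iff₀ (by positivity)]
        nlinarith [abs_nonneg c]

noncomputable def signedSqrt (F : ℝ → ℝ) (z u : ℝ) : ℝ :=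
  if z ≤ u then √(F u) else -√(F u)

section SignedSqrt

variable {F φ : ℝ → ℝ} {z a : ℝ}

theorem sq_signedSqrt {u : ℝ} (hu : 0 ≤ F u) : signedSqrt F z u ^ 2 = F u := by
  unfold signedSqrt
  split_ifs <;> simp [sq_sqrt hu]

theorem signedSqrt_div_sub {u : ℝ} (hu : u ≠ z) :
    signedSqrt F z u / (u - z) = √(F u) / |u - z| := by
  unfold signedSqrt
  split_ifs with h
  · rw [abs_of_pos (sub_pos.2 (lt_of_le_of_ne h hu.symm))]
  · rw [abs_of_neg (sub_neg.2 (not_le.1 h)), div_neg, neg_div]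

theorem hasDerivAt_signedSqrt_of_ne {u : ℝ} (hu : u ≠ z) (hFu : 0 < F u)
    (hd : HasDerivAt F (φ u) u) :
    HasDerivAt (signedSqrt F z) (φ u / (2 * signedSqrt F z u)) u := by
  have hs : √(F u) ≠ 0 := (sqrt_pos.2 hFu).ne'
  rcases hu.lt_or_gt with h | h
  · have hev : (fun x => -√(F x)) =ᶠ[𝓝 u] signedSqrt F z := by
      filter_upwards [Iio_mem_nhds h] with x (hx : x < z)
      simp [signedSqrt, not_le.2 hx]
    refine ((hd.sqrt hFu.ne').neg.congr_of_eventuallyEq hev.symm).congr_deriv ?_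
    simp only [signedSqrt, not_le.2 h, if_false]
    field_simp
  · have hev : (fun x => √(F x)) =ᶠ[𝓝 u] signedSqrt F z := by
      filter_upwards [Ioi_mem_nhds h] with x (hx : z < x)
      simp [signedSqrt, hx.le]
    refine ((hd.sqrt hFu.ne').congr_of_eventuallyEq hev.symm).congr_deriv ?_
    simp only [signedSqrt, h.le, if_true]

theorem tendsto_div_sub_of_hasDerivAt (hφz : φ z = 0) (hφ : HasDerivAt φ a z) :
    Tendsto (fun u => φ u / (u - z)) (𝓝[≠] z) (𝓝 a) := by
  refine (hasDerivAt_iff_tendsto_slope.1 hφ).congr' (Eventually.of_forall fun u => ?_)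
  rw [slope_def_field, hφz, sub_zero]

variable (hF : ∀ᶠ u in 𝓝 z, HasDerivAt F (φ u) u) (hFz : F z = 0) (hφz : φ z = 0)
  (hφ : HasDerivAt φ a z)
include hF hFz hφz hφ

theorem tendsto_div_sq_sub_of_hasDerivAt :
    Tendsto (fun u => F u / (u - z) ^ 2) (𝓝[≠] z) (𝓝 (a / 2)) := by
  have hFcont : Tendsto F (𝓝[≠] z) (𝓝 0) :=
    hFz ▸ hF.self_of_nhds.continuousAt.tendsto.mono_left nhdsWithin_le_nhds
  have hsq : Tendsto (fun u => (u - z) ^ 2) (𝓝[≠] z) (𝓝 0) := by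
    have : Continuous (fun u => (u - z) ^ 2) := by fun_prop
    simpa using this.continuousAt.tendsto.mono_left (nhdsWithin_le_nhds (a := z))
  refine HasDerivAt.lhopital_zero_nhdsNE (g' := fun u => 2 * (u - z))
    (hF.filter_mono nhdsWithin_le_nhds)
    (Eventually.of_forall fun u => by simpa using ((hasDerivAt_id u).sub_const z).fun_pow 2)
    ?_ hFcont hsq ?_
  · filter_upwards [self_mem_nhdsWithin] with u hu
    exact mul_ne_zero two_ne_zero (sub_ne_zero.2 hu)
  · refine ((tendsto_div_sub_of_hasDerivAt hφz hφ).div_const 2).congr' ?_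
    filter_upwards with u
    rw [div_div, mul_comm]

theorem tendsto_signedSqrt_div_sub :
    Tendsto (fun u => signedSqrt F z u / (u - z)) (𝓝[≠] z) (𝓝 √(a / 2)) := by
  refine ((continuous_sqrt.tendsto _).comp
    (tendsto_div_sq_sub_of_hasDerivAt hF hFz hφz hφ)).congr' ?_
  filter_upwards [self_mem_nhdsWithin] with u hu
  rw [Function.comp_apply, sqrt_div' _ (sq_nonneg _), sqrt_sq_eq_abs, signedSqrt_div_sub hu]

theorem hasDerivAt_signedSqrt_self : HasDerivAt (signedSqrt F z) √(a / 2) z := by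
  refine hasDerivAt_iff_tendsto_slope.2 ((tendsto_signedSqrt_div_sub hF hFz hφz hφ).congr' ?_)
  filter_upwards with u
  simp [slope_def_field, signedSqrt, hFz]

variable (ha : 0 < a)
include ha

theorem eventually_pos_of_hasDerivAt : ∀ᶠ u in 𝓝[≠] z, 0 < F u := by
  filter_upwards [(tendsto_div_sq_sub_of_hasDerivAt hF hFz hφz hφ).eventually_const_lt
    (half_pos ha), self_mem_nhdsWithin] with u hu hne
  exact (div_pos_iff_of_pos_right (sq_pos_of_ne_zero (sub_ne_zero.2 hne))).1 hu

theorem eventually_nonneg_of_hasDerivAt : ∀ᶠ u in 𝓝 z, 0 ≤ F u := by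
  filter_upwards [eventually_nhdsWithin_iff.1 (eventually_pos_of_hasDerivAt hF hFz hφz hφ ha)]
    with u hu
  rcases eq_or_ne u z with rfl | hne
  · exact hFz.ge
  · exact (hu hne).le

theorem continuousAt_deriv_signedSqrt : ContinuousAt (deriv (signedSqrt F z)) z := by
  rw [← continuousWithinAt_compl_self, ContinuousWithinAt,
    (hasDerivAt_signedSqrt_self hF hFz hφz hφ).deriv]
  have hlim := (tendsto_div_sub_of_hasDerivAt hφz hφ).div
    ((tendsto_signedSqrt_div_sub hF hFz hφz hφ).const_mul 2) (by positivity)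
  have hval : a / (2 * √(a / 2)) = √(a / 2) := by
    rw [div_eq_iff (by positivity), mul_left_comm, mul_self_sqrt (by positivity)]
    ring
  rw [hval] at hlim
  refine hlim.congr' ?_
  filter_upwards [self_mem_nhdsWithin, eventually_pos_of_hasDerivAt hF hFz hφz hφ ha,
    hF.filter_mono nhdsWithin_le_nhds] with u hne hFu hd
  have hG : signedSqrt F z u ≠ 0 := fun h0 => by
    have := sq_signedSqrt (z := z) hFu.le
    rw [h0] at this
    linarith
  rw [(hasDerivAt_signedSqrt_of_ne hne hFu hd).deriv, Pi.div_apply]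
  field_simp [sub_ne_zero.2 hne]

theorem eventually_hasDerivAt_signedSqrt :
    ∀ᶠ u in 𝓝 z, HasDerivAt (signedSqrt F z) (deriv (signedSqrt F z) u) u ∧
      0 < deriv (signedSqrt F z) u ∧ signedSqrt F z u ^ 2 = F u := by
  have hdiff : ∀ᶠ u in 𝓝 z, DifferentiableAt ℝ (signedSqrt F z) u := by
    filter_upwards [eventually_nhdsWithin_iff.1
      ((eventually_pos_of_hasDerivAt hF hFz hφz hφ ha).and (hF.filter_mono nhdsWithin_le_nhds))]
      with u hu
    rcases eq_or_ne u z with rfl | hne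
    · exact (hasDerivAt_signedSqrt_self hF hFz hφz hφ).differentiableAt
    · exact (hasDerivAt_signedSqrt_of_ne hne (hu hne).1 (hu hne).2).differentiableAt
  have hpos : ∀ᶠ u in 𝓝 z, 0 < deriv (signedSqrt F z) u :=
    continuousAt_const.eventually_lt (continuousAt_deriv_signedSqrt hF hFz hφz hφ ha)
      (by rw [(hasDerivAt_signedSqrt_self hF hFz hφz hφ).deriv]; positivity)
  filter_upwards [hdiff, hpos, eventually_nonneg_of_hasDerivAt hF hFz hφz hφ ha]
    with u hdu hpu hFu
  exact ⟨hdu.hasDerivAt, hpu, sq_signedSqrt hFu⟩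

end SignedSqrt

section Chart

variable {g g' F : ℝ → ℝ} {p q : ℝ} (hg : ∀ u ∈ Icc p q, HasDerivAt g (g' u) u ∧ 0 < g' u)
  (hgF : ∀ u ∈ Icc p q, g u ^ 2 = F u)
include hg hgF

theorem eq_neg_of_sq_eq_of_hasDerivAt_pos (hpq : p < q) (hFpq : F q = F p) : g p = -g q := by
  have hmono : StrictMonoOn g (Icc p q) :=
    strictMonoOn_of_hasDerivWithinAt_pos (convex_Icc p q)
      (fun u hu => (hg u hu).1.continuousAt.continuousWithinAt)
      (fun u hu => (hg u (interior_subset hu)).1.hasDerivWithinAt)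
      (fun u hu => (hg u (interior_subset hu)).2)
  have hp := left_mem_Icc.2 hpq.le
  have hq := right_mem_Icc.2 hpq.le
  have hsq : g p ^ 2 = g q ^ 2 := by rw [hgF p hp, hgF q hq, hFpq]
  exact (sq_eq_sq_iff_eq_or_eq_neg.1 hsq).resolve_left (hmono hp hq hpq).ne

theorem integrableOn_nonneg_integral_eq_pi_of_sq_eq (hpq : p < q) (hFpq : F q = F p) :
    IntegrableOn (fun u => g' u / √(g q ^ 2 - g u ^ 2)) (Ioc p q) ∧
      (∀ u ∈ Ioc p q, 0 ≤ g' u / √(g q ^ 2 - g u ^ 2)) ∧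
      ∫ u in Ioc p q, g' u / √(g q ^ 2 - g u ^ 2) = π := by
  have hcont : ContinuousOn g (Icc p q) :=
    fun u hu => (hg u hu).1.continuousAt.continuousWithinAt
  have hderiv := fun u (hu : u ∈ Ioo p q) => (hg u (Ioo_subset_Icc_self hu)).1
  have hderiv_pos := fun u (hu : u ∈ Ioo p q) => (hg u (Ioo_subset_Icc_self hu)).2
  have hgp := eq_neg_of_sq_eq_of_hasDerivAt_pos hg hgF hpq hFpq
  exact ⟨integrableOn_deriv_div_sqrt_sq_sub_sq hcont hderiv hderiv_pos hgp rfl,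
    fun u hu => div_nonneg (hg u (Ioc_subset_Icc_self hu)).2.le (sqrt_nonneg _),
    integral_deriv_div_sqrt_sq_sub_sq hcont hderiv hderiv_pos hgp rfl hpq⟩

theorem setIntegral_div_sqrt_sub_eq (hFpq : F q = F p) (w : ℝ → ℝ) :
    ∫ u in Ioc p q, w u / √(F p - F u) =
      ∫ u in Ioc p q, w u / g' u * (g' u / √(g q ^ 2 - g u ^ 2)) := by
  refine setIntegral_congr_fun measurableSet_Ioc fun u hu => ?_
  rw [← hgF u (Ioc_subset_Icc_self hu), ← hFpq, ← hgF q (right_mem_Icc.2 (hu.1.le.trans hu.2))]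
  exact (div_mul_div_cancel₀ (hg u (Ioc_subset_Icc_self hu)).2.ne').symm

end Chart

theorem tendsto_intervalIntegral_div_sqrt_sub {F φ w M : ℝ → ℝ} {z a : ℝ}
    (hF : ∀ᶠ u in 𝓝 z, HasDerivAt F (φ u) u) (hFz : F z = 0) (hφz : φ z = 0)
    (hφ : HasDerivAt φ a z) (ha : 0 < a) (hw : ContinuousAt w z) (hwm : Measurable w)
    (hM : ∀ᶠ m in 𝓝[<] z, z < M m ∧ F (M m) = F m) (hMlim : Tendsto M (𝓝[<] z) (𝓝 z)) :
    Tendsto (fun m => ∫ u in m..M m, w u / √(F m - F u)) (𝓝[<] z)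
      (𝓝 (π * w z * √(2 / a))) := by
  set G := signedSqrt F z
  obtain ⟨c, d, ⟨hcz, hzd⟩, hcd⟩ := mem_nhds_iff_exists_Ioo_subset.1
    (eventually_hasDerivAt_signedSqrt hF hFz hφz hφ ha)
  have hwin : ∀ᶠ m in 𝓝[<] z, Icc m (M m) ⊆ Ioo c d ∧ m < M m ∧ F (M m) = F m := by
    filter_upwards [Ioo_mem_nhdsLT hcz, hM, hMlim (Iio_mem_nhds hzd)] with m hm hMm hMd
    exact ⟨Icc_subset_Ioo hm.1 hMd, hm.2.trans hMm.1, hMm.2⟩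
  have hkernel := hwin.mono fun m ⟨hsub, hmM, hFM⟩ =>
    integrableOn_nonneg_integral_eq_pi_of_sq_eq
      (fun u hu => ⟨(hcd (hsub hu)).1, (hcd (hsub hu)).2.1⟩) (fun u hu => (hcd (hsub hu)).2.2)
      hmM hFM
  have hrewrite : ∀ᶠ m in 𝓝[<] z, ∫ u in Ioc m (M m), w u / deriv G u *
      (deriv G u / √(G (M m) ^ 2 - G u ^ 2)) = ∫ u in m..M m, w u / √(F m - F u) := by
    filter_upwards [hwin] with m ⟨hsub, hmM, hFM⟩
    rw [intervalIntegral.integral_of_le hmM.le, setIntegral_div_sqrt_sub_eq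
      (fun u hu => ⟨(hcd (hsub hu)).1, (hcd (hsub hu)).2.1⟩) (fun u hu => (hcd (hsub hu)).2.2)
      hFM w]
  have hquot : ContinuousAt (fun u => w u / deriv G u) z :=
    hw.div (continuousAt_deriv_signedSqrt hF hFz hφz hφ ha) (hcd ⟨hcz, hzd⟩).2.1.ne'
  convert (tendsto_setIntegral_Ioc_mul_of_concentrating (p := fun m => m)
    (tendsto_id.mono_left nhdsWithin_le_nhds) hMlim hquot (hwm.div (measurable_deriv G))
    hkernel).congr' hrewrite using 2
  rw [(hasDerivAt_signedSqrt_self hF hFz hφz hφ).deriv, ← inv_div a 2, sqrt_inv]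
  ring

theorem ContinuousAt.eq_zero_of_neg_of_pos {f : ℝ → ℝ} {x a b : ℝ} (hf : ContinuousAt f x)
    (hax : a < x) (hxb : x < b) (hneg : ∀ u ∈ Ioo a x, f u < 0)
    (hpos : ∀ u ∈ Ioo x b, 0 < f u) : f x = 0 :=
  le_antisymm
    (le_of_tendsto (hf.tendsto.mono_left nhdsWithin_le_nhds)
      (mem_of_superset (Ioo_mem_nhdsLT hax) fun u hu => (hneg u hu).le))
    (ge_of_tendsto (hf.tendsto.mono_left nhdsWithin_le_nhds)
      (mem_of_superset (Ioo_mem_nhdsGT hxb) fun u hu => (hpos u hu).le))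

theorem hasDerivAt_integral_of_continuousOn {f : ℝ → ℝ} {s : Set ℝ} {z u : ℝ}
    (hs : IsOpen s) (hs' : s.OrdConnected) (hf : ContinuousOn f s) (hz : z ∈ s) (hu : u ∈ s) :
    HasDerivAt (fun x => ∫ t in z..x, f t) (f u) u :=
  intervalIntegral.integral_hasDerivAt_right
    ((hf.mono (hs'.uIcc_subset hz hu)).intervalIntegrable)
    (hf.stronglyMeasurableAtFilter hs u hu) (hf.continuousAt (hs.mem_nhds hu))

theorem stmt_11_general (a₁ a₂ b₁ b₂ c₁ c₂ γ δ : ℝ)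
    (hγ : 0 < γ) (hδ : 0 < δ)
    (τ : ℝ) (hτ : 0 < τ)
    (z₁ z₂ z₃ : ℝ) (hz₁ : 0 < z₁) (hz₁₂ : z₁ < z₂) (hz₂₃ : z₂ < z₃)
    (hpos : ∀ u : ℝ, u ∈ Ioo 0 z₁ ∪ Ioo z₂ z₃ →
      0 < hfun a₁ a₂ b₁ b₂ c₁ c₂ γ u τ)
    (hneg : ∀ u : ℝ, u ∈ Ioo z₁ z₂ ∪ Ioi z₃ →
      hfun a₁ a₂ b₁ b₂ c₁ c₂ γ u τ < 0)
    (hu : ℝ) (hder : HasDerivAt (fun u => hfun a₁ a₂ b₁ b₂ c₁ c₂ γ u τ) hu z₂)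
    (hupos : 0 < hu)
    (H : ℝ → ℝ)
    (hH : ∀ u : ℝ, H u = ∫ s in z₂..u,
      hfun a₁ a₂ b₁ b₂ c₁ c₂ γ s τ * (δ + γ * τ / s ^ 2))
    (mbar : ℝ) (hmbar : mbar ∈ Ioo z₁ z₂)
    (M : ℝ → ℝ)
    (hM : ∀ m ∈ Ioo mbar z₂, M m ∈ Ioo z₂ z₃ ∧ H (M m) = H m)
    (hMlim : Tendsto M (𝓝[<] z₂) (𝓝 z₂)) :
    Tendsto (fun m => ∫ u in m..M m,
        (δ + γ * τ / u ^ 2) / Real.sqrt (H m - H u))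
      (𝓝[<] z₂)
      (𝓝 (Real.pi * Real.sqrt (2 * (δ + γ * τ / z₂ ^ 2) / hu))) := by
  have hz₂ : 0 < z₂ := hz₁.trans hz₁₂
  set w : ℝ → ℝ := fun u => δ + γ * τ / u ^ 2
  have hwz : 0 < w z₂ := by positivity
  have hf_cont : ContinuousOn (fun u => hfun a₁ a₂ b₁ b₂ c₁ c₂ γ u τ * w u) (Ioi 0) := by
    intro u (hu : 0 < u)
    refine ContinuousAt.continuousWithinAt ?_
    unfold hfun
    fun_prop (disch := positivity)
  have hh : hfun a₁ a₂ b₁ b₂ c₁ c₂ γ z₂ τ = 0 :=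
    hder.continuousAt.eq_zero_of_neg_of_pos hz₁₂ hz₂₃ (fun u hu => hneg u (Or.inl hu))
      (fun u hu => hpos u (Or.inr hu))
  have hφ : HasDerivAt (fun u => hfun a₁ a₂ b₁ b₂ c₁ c₂ γ u τ * w u) (hu * w z₂) z₂ := by
    have hwd : DifferentiableAt ℝ w z₂ := by fun_prop (disch := positivity)
    simpa [hh] using hder.fun_mul hwd.hasDerivAt
  have hF : ∀ᶠ u in 𝓝 z₂, HasDerivAt H (hfun a₁ a₂ b₁ b₂ c₁ c₂ γ u τ * w u) u := by
    rw [funext hH]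
    filter_upwards [Ioi_mem_nhds hz₂] with u hu
    exact hasDerivAt_integral_of_continuousOn isOpen_Ioi ordConnected_Ioi hf_cont hz₂ hu
  have hM' : ∀ᶠ m in 𝓝[<] z₂, z₂ < M m ∧ H (M m) = H m := by
    filter_upwards [Ioo_mem_nhdsLT hmbar.2] with m hm
    exact ⟨(hM m hm).1.1, (hM m hm).2⟩
  convert tendsto_intervalIntegral_div_sqrt_sub (w := w) hF (by rw [hH, intervalIntegral.integral_same])
    (by simp [hh]) hφ (mul_pos hupos hwz) (by fun_prop (disch := positivity))
    (by fun_prop) hM' hMlim using 2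
  rw [mul_assoc, show 2 * w z₂ / hu = w z₂ ^ 2 * (2 / (hu * w z₂)) by
    field_simp, sqrt_mul (sq_nonneg _), sqrt_sq hwz.le]

/-- The key time-map limit in the proof of Proposition 6.2: as the shooting level
`m` approaches the middle zero `z₂` from below, the weighted singular integral
`∫ₘ^{M(m)} (δ + γτ/u²)/√(H(m) − H(u)) du` converges to
`π √(2(δ + γτ/z₂²)/h_u(z₂,τ))`. -/
theorem stmt_11 (a₁ a₂ b₁ b₂ c₁ c₂ γ δ : ℝ)
    (ha₁ : 0 < a₁) (ha₂ : 0 < a₂) (hb₁ : 0 < b₁) (hb₂ : 0 < b₂)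
    (hc₁ : 0 < c₁) (hc₂ : 0 < c₂) (hγ : 0 < γ) (hδ : 0 < δ)
    (τ : ℝ) (hτ : 0 < τ)
    (z₁ z₂ z₃ : ℝ) (hz₁ : 0 < z₁) (hz₁₂ : z₁ < z₂) (hz₂₃ : z₂ < z₃)
    (hpos : ∀ u : ℝ, u ∈ Ioo 0 z₁ ∪ Ioo z₂ z₃ →
      0 < hfun a₁ a₂ b₁ b₂ c₁ c₂ γ u τ)
    (hneg : ∀ u : ℝ, u ∈ Ioo z₁ z₂ ∪ Ioi z₃ →
      hfun a₁ a₂ b₁ b₂ c₁ c₂ γ u τ < 0)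
    (hu : ℝ) (hder : HasDerivAt (fun u => hfun a₁ a₂ b₁ b₂ c₁ c₂ γ u τ) hu z₂)
    (hupos : 0 < hu)
    (H : ℝ → ℝ)
    (hH : ∀ u : ℝ, H u = ∫ s in z₂..u,
      hfun a₁ a₂ b₁ b₂ c₁ c₂ γ s τ * (δ + γ * τ / s ^ 2))
    (mbar : ℝ) (hmbar : mbar ∈ Ioo z₁ z₂)
    (M : ℝ → ℝ)
    (hM : ∀ m ∈ Ioo mbar z₂, M m ∈ Ioo z₂ z₃ ∧ H (M m) = H m)
    (hMlim : Tendsto M (𝓝[<] z₂) (𝓝 z₂)) :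
    Tendsto (fun m => ∫ u in m..M m,
        (δ + γ * τ / u ^ 2) / Real.sqrt (H m - H u))
      (𝓝[<] z₂)
      (𝓝 (Real.pi * Real.sqrt (2 * (δ + γ * τ / z₂ ^ 2) / hu))) :=
  stmt_11_general a₁ a₂ b₁ b₂ c₁ c₂ γ δ hγ hδ τ hτ z₁ z₂ z₃ hz₁ hz₁₂ hz₂₃ hpos hneg hu hder hupos H
    hH mbar hmbar M hM hMlim
end
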